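/- arXiv:0904.3869 — 7 statements merged into one kernel-verified Lean document; each statement's English description precedes it below -/
import Mathlib

section
/- Let φ̃ : ℝ³ → ℝ be convex and symmetric under permutations of its arguments. If (Q₁,Q₂,Q₃) is a subgradient of φ̃ at (σ₁,σ₂,σ₃), then (Qᵢ − Qⱼ)(σᵢ − σⱼ) ≥ 0 for every pair of indices i,j ∈ {1,2,3}; moreover, if φ̃ is strictly convex and σᵢ ≠ σⱼ, then (Qᵢ − Qⱼ)(σᵢ − σⱼ) > 0. In particular the components of any subgradient are ordered in the same algebraic order as (σ₁,σ₂,σ₃). -/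
/-- For a convex, permutation-symmetric function φ̃ : ℝ³ → ℝ, the components
of any subgradient at (σ₁,σ₂,σ₃) are ordered in the same algebraic order as (σ₁,σ₂,σ₃):
(Qᵢ − Qⱼ)(σᵢ − σⱼ) ≥ 0; strictly, if φ̃ is strictly convex and σᵢ ≠ σⱼ. -/
theorem subgradient_same_order
    (φ : (Fin 3 → ℝ) → ℝ)
    (hconv : ConvexOn ℝ Set.univ φ)
    (hsym : ∀ (e : Equiv.Perm (Fin 3)) (x : Fin 3 → ℝ), φ (x ∘ e) = φ x)
    (x Q : Fin 3 → ℝ)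
    (hQ : ∀ y : Fin 3 → ℝ, φ y - φ x ≥ ∑ i, Q i * (y i - x i)) :
    (∀ i j : Fin 3, 0 ≤ (Q i - Q j) * (x i - x j)) ∧
    (StrictConvexOn ℝ Set.univ φ →
      ∀ i j : Fin 3, x i ≠ x j → 0 < (Q i - Q j) * (x i - x j)) := by
  have hsum : ∀ i j : Fin 3,
      ∑ k, Q k * ((x ∘ Equiv.swap i j) k - x k) = (Q i - Q j) * (x j - x i) := by
    intro i j
    fin_cases i <;> fin_cases j <;>
      simp [Fin.sum_univ_three, Equiv.swap_apply_def] <;> ring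
  constructor
  · intro i j
    have h := hQ (x ∘ Equiv.swap i j)
    rw [hsym, hsum] at h
    nlinarith [h]
  · intro hsc i j hne
    set y : Fin 3 → ℝ := x ∘ Equiv.swap i j with hy
    have hyx : y ≠ x := by
      intro h
      apply hne
      have := congrFun h i
      simpa [hy, Equiv.swap_apply_left] using this.symm
    have hφy : φ y = φ x := hsym _ _
    have hmid := hsc.2 (Set.mem_univ x) (Set.mem_univ y) (Ne.symm hyx)
      (by norm_num : (0:ℝ) < 1/2) (by norm_num : (0:ℝ) < 1/2) (by norm_num)
    rw [hφy] at hmid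
    have hQm := hQ ((1/2 : ℝ) • x + (1/2 : ℝ) • y)
    have hsum2 : ∑ k, Q k * (((1/2 : ℝ) • x + (1/2 : ℝ) • y) k - x k)
        = (1/2) * ((Q i - Q j) * (x j - x i)) := by
      rw [show ∑ k, Q k * (((1/2 : ℝ) • x + (1/2 : ℝ) • y) k - x k)
          = (1/2) * ∑ k, Q k * (y k - x k) by
        rw [Finset.mul_sum]
        refine Finset.sum_congr rfl fun k _ => ?_
        simp [Pi.add_apply, Pi.smul_apply, smul_eq_mul]
        ring]
      rw [hy, hsum]
    rw [hsum2] at hQm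
    have : φ ((1/2 : ℝ) • x + (1/2 : ℝ) • y) < φ x := by
      have : (1/2 : ℝ) • φ x + (1/2 : ℝ) • φ x = φ x := by rw [smul_eq_mul]; ring
      linarith [hmid, this.le]
    nlinarith [hQm, this]
end

section
/- Let φ be an isotropic real-valued function of 3×3 real symmetric matrices (φ(RσRᵀ) = φ(σ) for all orthogonal R) and let φ̃(σ₁,σ₂,σ₃) = φ(diag(σ₁,σ₂,σ₃)) be the corresponding function of principal values. Fix a symmetric matrix σ with eigenvalues (σ₁,σ₂,σ₃). Then the following are equivalent: (i) there exists a symmetric matrix Q such that φ(σ′) − φ(σ) ≥ Q·(σ′ − σ) for all symmetric σ′; (ii) there exists (Q₁,Q₂,Q₃) ∈ ℝ³ such that φ̃(σ₁′,σ₂′,σ₃′) − φ̃(σ₁,σ₂,σ₃) ≥ Σᵢ Qᵢ(σᵢ′ − σᵢ) for all (σ₁′,σ₂′,σ₃′) ∈ ℝ³. Consequently, convexity of an isotropic (not necessarily smooth) function of a symmetric tensor is equivalent to convexity of the corresponding function of its principal values. -/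
/-!
Conjugating by an orthogonal matrix diagonalising `σ` turns a tensorial subgradient `Q` at `σ`
into the vector `diag (Uᵀ Q U)`, which is a subgradient of the principal-value function at the
eigenvalues of `σ`. Conversely, a vector subgradient `q` gives the tensor `U diag(q) Uᵀ`: for any
symmetric `σ'`, the diagonal of `Uᵀ σ' U = V diag(μ) Vᵀ` is `B μ` with `B = V ⊙ V` doubly
stochastic, so by Birkhoff's theorem the linear quantity `q ⬝ B μ` is at most `q ⬝ (μ ∘ τ)` for
some permutation `τ`, and `φ σ' = φ̃ (μ ∘ τ)` by isotropy. Convexity is equivalent to the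
existence of subgradients everywhere, which for the convex (hence continuous) function `φ̃` on
`ℝⁿ` follows from separating a point of the graph from the open strict epigraph.
-/

open Matrix

section Convexity

variable {E : Type*}

theorem ConvexOn.exists_subgradient [NormedAddCommGroup E] [NormedSpace ℝ E]
    [FiniteDimensional ℝ E] {f : E → ℝ} (hf : ConvexOn ℝ Set.univ f) (x : E) :
    ∃ g : StrongDual ℝ E, ∀ y, g (y - x) ≤ f y - f x := by
  set S : Set (E × ℝ) := {p | p.1 ∈ Set.univ ∧ f p.1 < p.2}
  have hS_open : IsOpen S := by
    have hf_cont : Continuous f := continuousOn_univ.1 (hf.continuousOn isOpen_univ)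
    simpa [S] using isOpen_lt (hf_cont.comp continuous_fst) continuous_snd
  obtain ⟨ℓ, hℓ⟩ := geometric_hahn_banach_open_point hf.convex_strict_epigraph hS_open
    (fun h => lt_irrefl _ h.2 : (x, f x) ∉ S)
  set c := ℓ (0, 1)
  have hℓ_apply (y : E) (t : ℝ) : ℓ (y, t) = ℓ (y, 0) + t * c := by
    have hyt : ((y, t) : E × ℝ) = (y, 0) + t • (0, 1) := by simp
    rw [hyt, map_add, map_smul, smul_eq_mul]
  have hc : c < 0 := by
    have := hℓ (x, f x + 1) ⟨trivial, by linarith⟩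
    rw [hℓ_apply, hℓ_apply x (f x)] at this
    linarith
  refine ⟨(-c)⁻¹ • ℓ.comp (ContinuousLinearMap.inl ℝ E ℝ), fun y => ?_⟩
  refine le_of_forall_pos_lt_add fun ε hε => ?_
  have := hℓ (y, f y + ε) ⟨trivial, by linarith⟩
  rw [hℓ_apply, hℓ_apply x (f x)] at this
  have hsub : ℓ (y - x, 0) = ℓ (y, 0) - ℓ (x, 0) := by
    rw [← map_sub, Prod.mk_sub_mk, sub_zero]
  change (-c)⁻¹ * ℓ (y - x, 0) < _
  rw [hsub, inv_mul_lt_iff₀ (neg_pos.2 hc)]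
  nlinarith

theorem convexOn_of_forall_exists_le_sub [AddCommGroup E] [Module ℝ E]
    {s : Set E} {f : E → ℝ} (hs : Convex ℝ s)
    (h : ∀ x ∈ s, ∃ g : E →ₗ[ℝ] ℝ, ∀ y ∈ s, g (y - x) ≤ f y - f x) : ConvexOn ℝ s f := by
  refine ⟨hs, fun x hx y hy a b ha hb hab => ?_⟩
  set z := a • x + b • y
  obtain ⟨g, hg⟩ := h z (hs hx hy ha hb hab)
  have hbal : a • (x - z) + b • (y - z) = 0 := by
    rw [smul_sub, smul_sub, ← add_sub_add_comm, ← add_smul, hab, one_smul, sub_self]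
  have := congrArg g hbal
  rw [map_add, map_smul, map_smul, map_zero, smul_eq_mul, smul_eq_mul] at this
  have hz : f z = a * f z + b * f z := by rw [← add_mul, hab, one_mul]
  rw [smul_eq_mul, smul_eq_mul]
  nlinarith [mul_le_mul_of_nonneg_left (hg x hx) ha, mul_le_mul_of_nonneg_left (hg y hy) hb]

theorem convexOn_diagonal_of_convexOn {n : Type*} [DecidableEq n] {φ : Matrix n n ℝ → ℝ}
    (hφ : ConvexOn ℝ {A : Matrix n n ℝ | A.IsHermitian} φ) :
    ConvexOn ℝ Set.univ fun v : n → ℝ => φ (diagonal v) := by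
  have hpre : diagonalLinearMap n ℝ ℝ ⁻¹' {A : Matrix n n ℝ | A.IsHermitian} = Set.univ :=
    Set.eq_univ_of_forall isHermitian_diagonal
  have h := hφ.comp_linearMap (diagonalLinearMap n ℝ ℝ)
  rw [hpre] at h
  exact h

end Convexity

section Conjugation

variable {n : Type*} [Fintype n]

theorem trace_conj_mul {R : Type*} [CommRing R] (U D A : Matrix n n R) :
    (U * D * Uᵀ * A).trace = (D * (Uᵀ * A * U)).trace := by
  rw [Matrix.mul_assoc, Matrix.mul_assoc, trace_mul_comm]
  simp only [Matrix.mul_assoc]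

theorem isHermitian_mul_mul_transpose (U : Matrix n n ℝ) {A : Matrix n n ℝ}
    (hA : A.IsHermitian) : (U * A * Uᵀ).IsHermitian := by
  simpa [conjTranspose_eq_transpose_of_trivial] using isHermitian_mul_mul_conjTranspose U hA

variable [DecidableEq n]

theorem trace_diagonal_mul {R : Type*} [CommRing R] (d : n → R) (A : Matrix n n R) :
    (diagonal d * A).trace = ∑ i, d i * A i i := by
  simp [trace, diagonal_mul]

theorem diag_mul_diagonal_mul_transpose {R : Type*} [CommSemiring R] (V : Matrix n n R)
    (μ : n → R) : (V * diagonal μ * Vᵀ).diag = (V ⊙ V) *ᵥ μ := by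
  ext i
  simp only [diag_apply, mul_apply (M := V * diagonal μ), mul_diagonal, transpose_apply, mulVec,
    dotProduct, hadamard_apply]
  exact Finset.sum_congr rfl fun j _ => by ring

theorem permMatrix_mul_diagonal_mul_transpose {R : Type*} [CommSemiring R] (τ : Equiv.Perm n)
    (v : n → R) : τ.permMatrix R * diagonal v * (τ.permMatrix R)ᵀ = diagonal (v ∘ τ) := by
  rw [transpose_permMatrix, PEquiv.toMatrix_toPEquiv_mul, PEquiv.mul_toMatrix_toPEquiv,
    submatrix_submatrix]
  exact submatrix_diagonal_equiv v τ

theorem permMatrix_mul_transpose {R : Type*} [CommSemiring R] (τ : Equiv.Perm n) :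
    τ.permMatrix R * (τ.permMatrix R)ᵀ = 1 := by
  simpa using permMatrix_mul_diagonal_mul_transpose (R := R) τ 1

theorem Matrix.IsHermitian.exists_orthogonal_eq_conj_diagonal {σ : Matrix n n ℝ}
    (hσ : σ.IsHermitian) : ∃ U ∈ orthogonalGroup n ℝ, σ = U * diagonal hσ.eigenvalues * Uᵀ := by
  refine ⟨hσ.eigenvectorUnitary, hσ.eigenvectorUnitary.2, ?_⟩
  conv_lhs => rw [hσ.spectral_theorem]
  simp [star_eq_conjTranspose, conjTranspose_eq_transpose_of_trivial]

end Conjugation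

section Birkhoff

variable {n : Type*} [Fintype n] [DecidableEq n]

theorem hadamard_self_mem_doublyStochastic {V : Matrix n n ℝ} (hV : V ∈ orthogonalGroup n ℝ) :
    V ⊙ V ∈ doublyStochastic ℝ n := by
  refine mem_doublyStochastic_iff_sum.2
    ⟨fun i j => mul_self_nonneg (V i j), fun i => ?_, fun j => ?_⟩
  · simpa [mul_apply, one_apply] using congrFun₂ ((mem_orthogonalGroup_iff _ _).1 hV) i i
  · simpa [mul_apply, one_apply] using congrFun₂ ((mem_orthogonalGroup_iff' _ _).1 hV) j j

theorem exists_perm_dotProduct_mulVec_le {R : Type*} [Field R] [LinearOrder R]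
    [IsStrictOrderedRing R] {B : Matrix n n R} (hB : B ∈ doublyStochastic R n) (a b : n → R) :
    ∃ τ : Equiv.Perm n, a ⬝ᵥ (B *ᵥ b) ≤ a ⬝ᵥ (b ∘ τ) := by
  have hlin : ConvexOn R Set.univ fun M : Matrix n n R => a ⬝ᵥ (M *ᵥ b) :=
    ⟨convex_univ, fun M _ N _ s t _ _ _ => by
      simp [add_mulVec, smul_mulVec, dotProduct_add, dotProduct_smul]⟩
  rw [← SetLike.mem_coe, doublyStochastic_eq_convexHull_permMatrix] at hB
  obtain ⟨_, ⟨τ, rfl⟩, hτ⟩ := hlin.exists_ge_of_mem_convexHull (Set.subset_univ _) hB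
  exact ⟨τ, by simpa [permMatrix_mulVec] using hτ⟩

theorem Matrix.IsHermitian.exists_perm_dotProduct_diag_le {A : Matrix n n ℝ}
    (hA : A.IsHermitian) (a : n → ℝ) :
    ∃ τ : Equiv.Perm n, a ⬝ᵥ A.diag ≤ a ⬝ᵥ (hA.eigenvalues ∘ τ) := by
  obtain ⟨U, hU, hA_eq⟩ := hA.exists_orthogonal_eq_conj_diagonal
  have := exists_perm_dotProduct_mulVec_le (hadamard_self_mem_doublyStochastic hU) a hA.eigenvalues
  rwa [← diag_mul_diagonal_mul_transpose, ← hA_eq] at this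

end Birkhoff

section Isotropic

variable {n : Type*} [Fintype n] [DecidableEq n]

def IsIsotropic (φ : Matrix n n ℝ → ℝ) : Prop :=
  ∀ σ : Matrix n n ℝ, σ.IsHermitian → ∀ R : Matrix n n ℝ, R * Rᵀ = 1 → φ (R * σ * Rᵀ) = φ σ

namespace IsIsotropic

variable {φ : Matrix n n ℝ → ℝ}

theorem apply_eq_apply_diagonal_eigenvalues (hφ : IsIsotropic φ) {σ : Matrix n n ℝ}
    (hσ : σ.IsHermitian) : φ σ = φ (diagonal hσ.eigenvalues) := by
  obtain ⟨U, hU, hσ_eq⟩ := hσ.exists_orthogonal_eq_conj_diagonal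
  conv_lhs => rw [hσ_eq]
  exact hφ _ (isHermitian_diagonal _) U ((mem_orthogonalGroup_iff _ _).1 hU)

theorem apply_diagonal_comp_perm (hφ : IsIsotropic φ) (τ : Equiv.Perm n) (v : n → ℝ) :
    φ (diagonal (v ∘ τ)) = φ (diagonal v) := by
  rw [← permMatrix_mul_diagonal_mul_transpose]
  exact hφ _ (isHermitian_diagonal v) _ (permMatrix_mul_transpose τ)

theorem exists_subgradient_diagonal (hφ : IsIsotropic φ) {σ Q : Matrix n n ℝ}
    (hσ : σ.IsHermitian)
    (hQ : ∀ σ' : Matrix n n ℝ, σ'.IsHermitian → φ σ' - φ σ ≥ (Q * (σ' - σ)).trace) :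
    ∃ q : n → ℝ, ∀ v : n → ℝ,
      φ (diagonal v) - φ (diagonal hσ.eigenvalues) ≥ ∑ i, q i * (v i - hσ.eigenvalues i) := by
  obtain ⟨U, hU, hσ_eq⟩ := hσ.exists_orthogonal_eq_conj_diagonal
  refine ⟨(Uᵀ * Q * U).diag, fun v => ?_⟩
  have hdiff : U * diagonal v * Uᵀ - σ = U * diagonal (v - hσ.eigenvalues) * Uᵀ := by
    conv_lhs => rw [hσ_eq]
    rw [← Matrix.sub_mul, ← Matrix.mul_sub, diagonal_sub]
    rfl
  have h := hQ _ (isHermitian_mul_mul_transpose U (isHermitian_diagonal v))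
  rw [hφ _ (isHermitian_diagonal v) U ((mem_orthogonalGroup_iff _ _).1 hU),
    hφ.apply_eq_apply_diagonal_eigenvalues hσ, hdiff, trace_mul_comm, trace_conj_mul,
    trace_diagonal_mul] at h
  simpa only [mul_comm, diag_apply, Pi.sub_apply] using h

theorem exists_subgradient_of_diagonal (hφ : IsIsotropic φ) {σ : Matrix n n ℝ}
    (hσ : σ.IsHermitian) {q : n → ℝ}
    (hq : ∀ v : n → ℝ,
      φ (diagonal v) - φ (diagonal hσ.eigenvalues) ≥ ∑ i, q i * (v i - hσ.eigenvalues i)) :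
    ∃ Q : Matrix n n ℝ, Q.IsHermitian ∧
      ∀ σ' : Matrix n n ℝ, σ'.IsHermitian → φ σ' - φ σ ≥ (Q * (σ' - σ)).trace := by
  obtain ⟨U, hU, hσ_eq⟩ := hσ.exists_orthogonal_eq_conj_diagonal
  have hUtU : Uᵀ * U = 1 := (mem_orthogonalGroup_iff' _ _).1 hU
  refine ⟨U * diagonal q * Uᵀ, isHermitian_mul_mul_transpose U (isHermitian_diagonal q),
    fun σ' hσ' => ?_⟩
  set A := Uᵀ * σ' * U
  have hA : A.IsHermitian := by simpa using isHermitian_mul_mul_transpose Uᵀ hσ'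
  have hφA : φ σ' = φ (diagonal hA.eigenvalues) := by
    rw [← hφ.apply_eq_apply_diagonal_eigenvalues hA]
    simpa using (hφ σ' hσ' Uᵀ (by simpa using hUtU)).symm
  have hUσU : Uᵀ * σ * U = diagonal hσ.eigenvalues := by
    conv_lhs => rw [hσ_eq]
    simp only [← Matrix.mul_assoc, hUtU, Matrix.one_mul]
    rw [Matrix.mul_assoc, hUtU, Matrix.mul_one]
  obtain ⟨τ, hτ⟩ := hA.exists_perm_dotProduct_diag_le q
  calc (U * diagonal q * Uᵀ * (σ' - σ)).trace
      = q ⬝ᵥ A.diag - q ⬝ᵥ hσ.eigenvalues := by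
        rw [trace_conj_mul, Matrix.mul_sub, Matrix.sub_mul, hUσU, Matrix.mul_sub, trace_sub,
          trace_diagonal_mul, trace_diagonal_mul]
        simp [dotProduct, A]
    _ ≤ q ⬝ᵥ (hA.eigenvalues ∘ τ) - q ⬝ᵥ hσ.eigenvalues := by linarith
    _ = ∑ i, q i * ((hA.eigenvalues ∘ τ) i - hσ.eigenvalues i) := by
        simp only [dotProduct, mul_sub, Finset.sum_sub_distrib]
    _ ≤ φ (diagonal (hA.eigenvalues ∘ τ)) - φ (diagonal hσ.eigenvalues) := hq _
    _ = φ σ' - φ σ := by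
        rw [hφ.apply_diagonal_comp_perm, ← hφA, ← hφ.apply_eq_apply_diagonal_eigenvalues hσ]

theorem exists_subgradient_iff (hφ : IsIsotropic φ) {σ : Matrix n n ℝ} (hσ : σ.IsHermitian) :
    (∃ Q : Matrix n n ℝ, Q.IsHermitian ∧
        ∀ σ' : Matrix n n ℝ, σ'.IsHermitian → φ σ' - φ σ ≥ (Q * (σ' - σ)).trace) ↔
      ∃ q : n → ℝ, ∀ v : n → ℝ,
        φ (diagonal v) - φ (diagonal hσ.eigenvalues) ≥ ∑ i, q i * (v i - hσ.eigenvalues i) :=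
  ⟨fun ⟨_, _, hQ⟩ => hφ.exists_subgradient_diagonal hσ hQ,
    fun ⟨_, hq⟩ => hφ.exists_subgradient_of_diagonal hσ hq⟩

theorem convexOn_of_convexOn_diagonal (hφ : IsIsotropic φ)
    (h : ConvexOn ℝ Set.univ fun v : n → ℝ => φ (diagonal v)) :
    ConvexOn ℝ {A : Matrix n n ℝ | A.IsHermitian} φ := by
  refine convexOn_of_forall_exists_le_sub (selfAdjoint.submodule ℝ (Matrix n n ℝ)).convex
    fun σ hσ => ?_
  obtain ⟨g, hg⟩ := h.exists_subgradient hσ.eigenvalues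
  have hq (v : n → ℝ) : φ (diagonal v) - φ (diagonal hσ.eigenvalues) ≥
      ∑ i, g (Pi.single i 1) * (v i - hσ.eigenvalues i) := by
    calc ∑ i, g (Pi.single i 1) * (v i - hσ.eigenvalues i) = g (v - hσ.eigenvalues) := by
          conv_rhs => rw [pi_eq_sum_univ' (v - hσ.eigenvalues)]
          simp [map_sum, mul_comm]
      _ ≤ _ := hg v
  obtain ⟨Q, -, hQ⟩ := hφ.exists_subgradient_of_diagonal hσ hq
  exact ⟨(traceLinearMap n ℝ ℝ).comp (LinearMap.mulLeft ℝ Q), fun σ' hσ' => by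
    simpa using hQ σ' hσ'⟩

theorem convexOn_iff (hφ : IsIsotropic φ) :
    ConvexOn ℝ {A : Matrix n n ℝ | A.IsHermitian} φ ↔
      ConvexOn ℝ Set.univ fun v : n → ℝ => φ (diagonal v) :=
  ⟨convexOn_diagonal_of_convexOn, hφ.convexOn_of_convexOn_diagonal⟩

end IsIsotropic

end Isotropic

/-- Extension of Hill's theorem to nonregular functions. For an isotropic
function φ of 3×3 real symmetric matrices and a fixed symmetric σ with eigenvalues
(σ₁,σ₂,σ₃), existence of a tensorial subgradient of φ at σ is equivalent to existence
of a subgradient of the principal-value function φ̃(v) = φ(diag v) at (σ₁,σ₂,σ₃).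
Consequently, convexity of φ (on symmetric matrices) is equivalent to convexity of φ̃. -/
theorem hill_nonsmooth
    (φ : Matrix (Fin 3) (Fin 3) ℝ → ℝ)
    (hiso : ∀ (σ : Matrix (Fin 3) (Fin 3) ℝ), σ.IsHermitian →
      ∀ R : Matrix (Fin 3) (Fin 3) ℝ, R * Rᵀ = 1 → φ (R * σ * Rᵀ) = φ σ)
    (σ : Matrix (Fin 3) (Fin 3) ℝ) (hσ : σ.IsHermitian) :
    ((∃ Q : Matrix (Fin 3) (Fin 3) ℝ, Q.IsHermitian ∧
        ∀ σ' : Matrix (Fin 3) (Fin 3) ℝ, σ'.IsHermitian →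
          φ σ' - φ σ ≥ (Q * (σ' - σ)).trace) ↔
      (∃ Qv : Fin 3 → ℝ, ∀ v : Fin 3 → ℝ,
        φ (Matrix.diagonal v) - φ (Matrix.diagonal hσ.eigenvalues) ≥
          ∑ i, Qv i * (v i - hσ.eigenvalues i))) ∧
    (ConvexOn ℝ {A : Matrix (Fin 3) (Fin 3) ℝ | A.IsHermitian} φ ↔
      ConvexOn ℝ Set.univ (fun v : Fin 3 → ℝ => φ (Matrix.diagonal v))) :=
  ⟨IsIsotropic.exists_subgradient_iff hiso hσ, IsIsotropic.convexOn_iff hiso⟩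
end

section
/- Let g : [0, π/3] → ℝ be continuous and strictly positive. For any slope k ∈ ℝ, let h(ε) = G(ε, kε) be the restriction of G = q/g(θ) to the line through the origin of direction (1,k) in the (S₁,S₂)-plane. Then h has one-sided derivatives at ε = 0 satisfying h′₋(0) < 0 < h′₊(0); explicitly, h′₊(0) = √3·√(1+k+k²)/g(θ₊) and h′₋(0) = −√3·√(1+k+k²)/g(θ₋), where θ₊ and θ₋ are the (constant) values of θ on the two open half-lines. Hence the nonsmoothness of G along the hydrostatic axis S₁ = S₂ = 0 never violates convexity of the restriction of G to any line through the origin. -/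
/-- The deviatoric stress invariant q(S₁,S₂) = √(3(S₁² + S₁S₂ + S₂²)), with S₃ = −S₁−S₂. -/
noncomputable def qf (S : ℝ × ℝ) : ℝ :=
  Real.sqrt (3 * (S.1 ^ 2 + S.1 * S.2 + S.2 ^ 2))

/-- The Lode angle θ(S₁,S₂) = (1/3)·arccos((27/2)·S₁S₂S₃/q³) ∈ [0, π/3], S₃ = −S₁−S₂. -/
noncomputable def θf (S : ℝ × ℝ) : ℝ :=
  (1 / 3) * Real.arccos ((27 / 2) * (S.1 * S.2 * (-S.1 - S.2)) / (qf S) ^ 3)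

/-- The deviatoric yield function G(S₁,S₂) = q(S₁,S₂)/g(θ(S₁,S₂)) (equal to 0 at the
origin, where q = 0). -/
noncomputable def Gf (g : ℝ → ℝ) (S : ℝ × ℝ) : ℝ :=
  qf S / g (θf S)

/-!
Both `q` and the Lode angle are positively homogeneous in `(S₁, S₂)`, of degree one and zero
respectively (the argument of `arccos` is a ratio of two cubic forms). Hence `G` is positively
homogeneous of degree one, so on each closed half-line through the origin its restriction is linear:
`G(ε, kε) = ε G(1, k)` for `ε ≥ 0` and `G(ε, kε) = -ε G(-1, -k)` for `ε ≤ 0`. The one-sided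
derivatives are the slopes `±q(1, k)/g(θ±)`, whose signs are those of `±1` since `g > 0`.
-/

open Set

section PositivelyHomogeneous

variable {E F : Type*} [AddCommGroup E] [Module ℝ E] [NormedAddCommGroup F] [NormedSpace ℝ F]
  {f : E → F}

theorem hasDerivWithinAt_Ici_zero_of_posHomogeneous
    (hf : ∀ t : ℝ, 0 ≤ t → ∀ x, f (t • x) = t • f x) (v : E) :
    HasDerivWithinAt (fun ε : ℝ => f (ε • v)) (f v) (Ici 0) 0 := by
  have hlin : HasDerivAt (fun ε : ℝ => ε • f v) (f v) 0 := by
    simpa using (hasDerivAt_id (0 : ℝ)).smul_const (f v)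
  exact hlin.hasDerivWithinAt.congr (fun ε hε => hf ε hε v) (hf 0 le_rfl v)

theorem hasDerivWithinAt_Iic_zero_of_posHomogeneous
    (hf : ∀ t : ℝ, 0 ≤ t → ∀ x, f (t • x) = t • f x) (v : E) :
    HasDerivWithinAt (fun ε : ℝ => f (ε • v)) (-f (-v)) (Iic 0) 0 := by
  have hlin : HasDerivAt (fun ε : ℝ => (-ε) • f (-v)) (-f (-v)) 0 := by
    simpa using (hasDerivAt_neg (0 : ℝ)).smul_const (f (-v))
  refine hlin.hasDerivWithinAt.congr (fun ε hε => ?_) (by simpa using hf 0 le_rfl (-v))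
  rw [← hf (-ε) (neg_nonneg.2 hε), smul_neg, neg_smul, neg_neg]

end PositivelyHomogeneous

theorem qf_smul (t : ℝ) (S : ℝ × ℝ) : qf (t • S) = |t| * qf S := by
  rw [qf, qf, ← Real.sqrt_sq_eq_abs, ← Real.sqrt_mul (sq_nonneg t)]
  congr 1
  simp only [Prod.smul_fst, Prod.smul_snd, smul_eq_mul]
  ring

theorem qf_neg (S : ℝ × ℝ) : qf (-S) = qf S := by
  simpa using qf_smul (-1) S

theorem qf_one_mk (k : ℝ) : qf (1, k) = √3 * √(1 + k + k ^ 2) := by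
  rw [qf, ← Real.sqrt_mul (by norm_num)]
  congr 1
  ring

theorem θf_mem_Icc (S : ℝ × ℝ) : θf S ∈ Icc 0 (Real.pi / 3) := by
  have h₀ := Real.arccos_nonneg ((27 / 2) * (S.1 * S.2 * (-S.1 - S.2)) / (qf S) ^ 3)
  have hπ := Real.arccos_le_pi ((27 / 2) * (S.1 * S.2 * (-S.1 - S.2)) / (qf S) ^ 3)
  constructor <;> unfold θf <;> linarith

theorem θf_smul_of_pos {t : ℝ} (ht : 0 < t) (S : ℝ × ℝ) : θf (t • S) = θf S := by
  rw [θf, θf, qf_smul, abs_of_pos ht]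
  congr 2
  simp only [Prod.smul_fst, Prod.smul_snd, smul_eq_mul]
  rcases eq_or_ne (qf S) 0 with hq | hq
  · simp [hq]
  · field_simp

theorem Gf_smul_of_nonneg (g : ℝ → ℝ) (t : ℝ) (ht : 0 ≤ t) (S : ℝ × ℝ) :
    Gf g (t • S) = t * Gf g S := by
  rcases ht.eq_or_lt with rfl | ht
  · simp [Gf, qf]
  · rw [Gf, Gf, qf_smul, abs_of_pos ht, θf_smul_of_pos ht, mul_div_assoc]

theorem one_sided_derivs_through_origin_general
    (g : ℝ → ℝ)
    (hgpos : ∀ t ∈ Set.Icc 0 (Real.pi / 3), 0 < g t)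
    (k : ℝ) :
    HasDerivWithinAt (fun ε : ℝ => Gf g (ε, k * ε))
      (Real.sqrt 3 * Real.sqrt (1 + k + k ^ 2) / g (θf (1, k))) (Set.Ici 0) 0 ∧
    HasDerivWithinAt (fun ε : ℝ => Gf g (ε, k * ε))
      (-(Real.sqrt 3 * Real.sqrt (1 + k + k ^ 2)) / g (θf (-1, -k))) (Set.Iic 0) 0 ∧
    -(Real.sqrt 3 * Real.sqrt (1 + k + k ^ 2)) / g (θf (-1, -k)) < 0 ∧
    0 < Real.sqrt 3 * Real.sqrt (1 + k + k ^ 2) / g (θf (1, k)) := by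
  have hline : (fun ε : ℝ => Gf g (ε, k * ε)) = fun ε : ℝ => Gf g (ε • ((1 : ℝ), k)) := by
    funext ε
    congr 1
    ext <;> simp [mul_comm]
  have hq_neg : qf (-1, -k) = qf (1, k) := by simpa using qf_neg (1, k)
  have hk : 0 < 1 + k + k ^ 2 := by nlinarith [sq_nonneg (2 * k + 1)]
  have hslope : 0 < qf (1, k) := qf_one_mk k ▸ mul_pos (by positivity) (Real.sqrt_pos.2 hk)
  rw [hline, ← qf_one_mk, neg_div]
  refine ⟨hasDerivWithinAt_Ici_zero_of_posHomogeneous (Gf_smul_of_nonneg g) (1, k), ?_, ?_,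
    div_pos hslope (hgpos _ (θf_mem_Icc _))⟩
  · rw [← hq_neg]
    exact hasDerivWithinAt_Iic_zero_of_posHomogeneous (Gf_smul_of_nonneg g) (1, k)
  · rw [neg_lt_zero]
    exact div_pos hslope (hgpos _ (θf_mem_Icc _))

/-- the restriction h(ε) = G(ε, kε) of G = q/g(θ) to any line through the
origin has one-sided derivatives at ε = 0 equal to ±√3·√(1+k+k²)/g(θ±), where θ± are the
constant values of θ on the two open half-lines, and h′₋(0) < 0 < h′₊(0); hence the
nonsmoothness along the hydrostatic axis never violates convexity of the restriction. -/
theorem one_sided_derivs_through_origin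
    (g : ℝ → ℝ)
    (hgc : ContinuousOn g (Set.Icc 0 (Real.pi / 3)))
    (hgpos : ∀ t ∈ Set.Icc 0 (Real.pi / 3), 0 < g t)
    (k : ℝ) :
    HasDerivWithinAt (fun ε : ℝ => Gf g (ε, k * ε))
      (Real.sqrt 3 * Real.sqrt (1 + k + k ^ 2) / g (θf (1, k))) (Set.Ici 0) 0 ∧
    HasDerivWithinAt (fun ε : ℝ => Gf g (ε, k * ε))
      (-(Real.sqrt 3 * Real.sqrt (1 + k + k ^ 2)) / g (θf (-1, -k))) (Set.Iic 0) 0 ∧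
    -(Real.sqrt 3 * Real.sqrt (1 + k + k ^ 2)) / g (θf (-1, -k)) < 0 ∧
    0 < Real.sqrt 3 * Real.sqrt (1 + k + k ^ 2) / g (θf (1, k)) :=
  one_sided_derivs_through_origin_general g hgpos k
end

section
/- Let g : [0, π/3] → ℝ be continuous, strictly positive, differentiable on (0, π/3), and possess a one-sided derivative g′₊(0) at 0 and g′₋(π/3) at π/3. Fix k ≠ −1/2 and consider the restriction h(ε) = G(1 + ε, −1/2 + kε) of G = q/g(θ) to a line through the point (S₁,S₂) = (1, −1/2), which lies on the axis θ = 0. Then h has one-sided derivatives at ε = 0 given by h′±(0) = 3/(2g(0)) ∓ (√3/2)·|1 + 2k|·g′₊(0)/g(0)². Consequently the convexity condition h′₋(0) ≤ h′₊(0) holds for every such line if and only if g′₊(0) ≤ 0. -/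
/-! Along the line `ε ↦ (1 + ε, -1/2 + kε)` the invariant `q` is smooth, and the identity
`cos² 3θ + sin² 3θ = 1` with `sin 3θ ∝ (S₁-S₂)(S₂-S₃)(S₁-S₃)/q³` turns `θ = arccos(…)/3` near
`ε = 0` into `|arcsin(sin 3θ)|/3`. Since `S₂ - S₃ = (1 + 2k)ε`, `sin 3θ` is smooth with slope
`√3 (1 + 2k)` at `0`, so `θ` has a corner with one-sided slopes `±√3 |1 + 2k| / 3`; the quotient
rule for `q / g(θ)` then gives the two one-sided derivatives of `G`. -/

open Real Set Filter Topology Asymptotics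

theorem Real.arccos_eq_abs_arcsin {u v : ℝ} (hu : 0 ≤ u) (huv : u ^ 2 + v ^ 2 = 1) :
    arccos u = |arcsin v| := by
  rw [arccos_eq_arcsin hu, show 1 - u ^ 2 = v ^ 2 by linarith, sqrt_sq_eq_abs]
  rcases le_total 0 v with hv | hv
  · rw [abs_of_nonneg hv, abs_of_nonneg (arcsin_nonneg.2 hv)]
  · rw [abs_of_nonpos hv, abs_of_nonpos (arcsin_nonpos.2 hv), arcsin_neg]

theorem HasDerivAt.hasDerivWithinAt_abs {f : ℝ → ℝ} {a c x : ℝ} {s : Set ℝ}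
    (hf : HasDerivAt f a x) (hfx : f x = 0) (hs : ∀ y ∈ s, |a * (y - x)| = c * (y - x)) :
    HasDerivWithinAt (fun y => |f y|) c s x := by
  refine .of_isLittleO (IsBigO.trans_isLittleO ?_ (hf.isLittleO.mono nhdsWithin_le_nhds))
  refine IsBigO.of_bound' (eventually_nhdsWithin_of_forall fun y hy => ?_)
  simp only [hfx, abs_zero, sub_zero, smul_eq_mul, norm_eq_abs, mul_comm (y - x)]
  rw [← hs y hy]
  exact abs_abs_sub_abs_le_abs_sub _ _

theorem HasDerivAt.hasDerivWithinAt_abs_Ici {f : ℝ → ℝ} {a x : ℝ}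
    (hf : HasDerivAt f a x) (hfx : f x = 0) :
    HasDerivWithinAt (fun y => |f y|) |a| (Ici x) x :=
  hf.hasDerivWithinAt_abs hfx fun y hy => by
    rw [abs_mul, abs_of_nonneg (sub_nonneg.2 hy)]

theorem HasDerivAt.hasDerivWithinAt_abs_Iic {f : ℝ → ℝ} {a x : ℝ}
    (hf : HasDerivAt f a x) (hfx : f x = 0) :
    HasDerivWithinAt (fun y => |f y|) (-|a|) (Iic x) x :=
  hf.hasDerivWithinAt_abs hfx fun y hy => by
    rw [abs_mul, abs_of_nonpos (sub_nonpos.2 hy)]; ring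

theorem qf_sq (S : ℝ × ℝ) : qf S ^ 2 = 3 * (S.1 ^ 2 + S.1 * S.2 + S.2 ^ 2) :=
  sq_sqrt (by nlinarith [sq_nonneg (S.1 + S.2), sq_nonneg S.1, sq_nonneg S.2])

/-- `sin 3θ`, written through the differences of the principal stresses `S₁, S₂, S₃ = −S₁−S₂`. -/
noncomputable def lodeSin (S : ℝ × ℝ) : ℝ :=
  3 * √3 / 2 * ((S.1 - S.2) * (S.2 - (-S.1 - S.2)) * (S.1 - (-S.1 - S.2))) / qf S ^ 3

/-- The discriminant identity `q⁶ = (27/2 S₁S₂S₃)² + 27/4 ((S₁-S₂)(S₂-S₃)(S₁-S₃))²`. -/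
theorem lode_cos_sq_add_lodeSin_sq {S : ℝ × ℝ} (hq : qf S ≠ 0) :
    (27 / 2 * (S.1 * S.2 * (-S.1 - S.2)) / qf S ^ 3) ^ 2 + lodeSin S ^ 2 = 1 := by
  have hq6 : (qf S ^ 3) ^ 2 = (3 * (S.1 ^ 2 + S.1 * S.2 + S.2 ^ 2)) ^ 3 := by
    rw [← qf_sq]; ring
  rw [lodeSin, div_pow, div_pow, ← add_div, div_eq_one_iff_eq (pow_ne_zero _ (pow_ne_zero _ hq)),
    hq6]
  linear_combination (9 / 4 * ((S.1 - S.2) * (S.2 - (-S.1 - S.2)) * (S.1 - (-S.1 - S.2))) ^ 2)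
    * sq_sqrt (by norm_num : (0 : ℝ) ≤ 3)

theorem θf_eq_abs_arcsin_lodeSin {S : ℝ × ℝ} (hq : qf S ≠ 0)
    (hS : 0 ≤ S.1 * S.2 * (-S.1 - S.2)) : θf S = |arcsin (lodeSin S) / 3| := by
  have hu : 0 ≤ 27 / 2 * (S.1 * S.2 * (-S.1 - S.2)) / qf S ^ 3 := by
    have : 0 ≤ qf S := sqrt_nonneg _
    positivity
  rw [θf, arccos_eq_abs_arcsin hu (lode_cos_sq_add_lodeSin_sq hq), abs_div,
    abs_of_pos (by norm_num : (0 : ℝ) < 3)]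
  ring

theorem θf_nonneg (S : ℝ × ℝ) : 0 ≤ θf S :=
  mul_nonneg (by norm_num) (arccos_nonneg _)

noncomputable def cornerLine (k ε : ℝ) : ℝ × ℝ := (1 + ε, -1 / 2 + k * ε)

section cornerLine

variable (k : ℝ)

theorem qf_cornerLine_zero : qf (cornerLine k 0) = 3 / 2 := by
  rw [qf, cornerLine, show 3 * ((1 + 0) ^ 2 + (1 + 0) * (-1 / 2 + k * 0) + (-1 / 2 + k * 0) ^ 2)
    = (3 / 2 : ℝ) ^ 2 by ring]
  exact sqrt_sq (by norm_num)

theorem lodeSin_cornerLine_zero : lodeSin (cornerLine k 0) = 0 := by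
  norm_num [lodeSin, cornerLine]

theorem hasDerivAt_fst_cornerLine : HasDerivAt (fun ε => (cornerLine k ε).1) 1 0 :=
  (hasDerivAt_id' 0).const_add 1

theorem hasDerivAt_snd_cornerLine : HasDerivAt (fun ε => (cornerLine k ε).2) k 0 := by
  simpa [cornerLine] using ((hasDerivAt_id' 0).const_mul k).const_add (-1 / 2)

theorem hasDerivAt_qf_cornerLine : HasDerivAt (fun ε => qf (cornerLine k ε)) (3 / 2) 0 := by
  have h1 := hasDerivAt_fst_cornerLine k
  have h2 := hasDerivAt_snd_cornerLine k
  have hq := (((h1.fun_pow 2).fun_add (h1.fun_mul h2)).fun_add (h2.fun_pow 2)).const_mul 3 |>.sqrt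
    (by norm_num [cornerLine])
  refine hq.congr_deriv ?_
  rw [← qf, qf_cornerLine_zero]
  simp only [cornerLine]
  ring

theorem hasDerivAt_lodeSin_cornerLine :
    HasDerivAt (fun ε => lodeSin (cornerLine k ε)) (√3 * (1 + 2 * k)) 0 := by
  have h1 := hasDerivAt_fst_cornerLine k
  have h2 := hasDerivAt_snd_cornerLine k
  have hnum := (((h1.fun_sub h2).fun_mul (h2.fun_sub (h1.fun_neg.fun_sub h2))).fun_mul
    (h1.fun_sub (h1.fun_neg.fun_sub h2))).const_mul (3 * √3 / 2)
  have hL := hnum.fun_div ((hasDerivAt_qf_cornerLine k).fun_pow 3)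
    (by rw [qf_cornerLine_zero]; norm_num)
  refine hL.congr_deriv ?_
  rw [qf_cornerLine_zero]
  simp only [cornerLine]
  ring

theorem θf_cornerLine_eventuallyEq :
    (fun ε => θf (cornerLine k ε)) =ᶠ[𝓝 0]
      fun ε => |arcsin (lodeSin (cornerLine k ε)) / 3| := by
  have hq : ∀ᶠ ε in 𝓝 0, qf (cornerLine k ε) ≠ 0 :=
    (hasDerivAt_qf_cornerLine k).continuousAt.eventually_ne (by rw [qf_cornerLine_zero]; norm_num)
  have hS : ∀ᶠ ε in 𝓝 (0 : ℝ), 0 < (cornerLine k ε).1 * (cornerLine k ε).2 *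
      (-(cornerLine k ε).1 - (cornerLine k ε).2) :=
    continuousAt_const.eventually_lt (by unfold cornerLine; fun_prop) (by norm_num [cornerLine])
  filter_upwards [hq, hS] with ε hqε hSε
  exact θf_eq_abs_arcsin_lodeSin hqε hSε.le

theorem θf_cornerLine_zero : θf (cornerLine k 0) = 0 := by
  simp [(θf_cornerLine_eventuallyEq k).eq_of_nhds, lodeSin_cornerLine_zero]

theorem hasDerivAt_arcsin_lodeSin_cornerLine :
    HasDerivAt (fun ε => arcsin (lodeSin (cornerLine k ε)) / 3) (√3 * (1 + 2 * k) / 3) 0 := by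
  have harcsin : HasDerivAt arcsin 1 (lodeSin (cornerLine k 0)) := by
    simpa [lodeSin_cornerLine_zero] using hasDerivAt_arcsin (x := 0) (by norm_num) (by norm_num)
  simpa using (harcsin.comp 0 (hasDerivAt_lodeSin_cornerLine k)).div_const 3

theorem hasDerivWithinAt_θf_cornerLine_Ici :
    HasDerivWithinAt (fun ε => θf (cornerLine k ε)) (√3 * |1 + 2 * k| / 3) (Ici 0) 0 := by
  have h := (hasDerivAt_arcsin_lodeSin_cornerLine k).hasDerivWithinAt_abs_Ici
    (by simp [lodeSin_cornerLine_zero])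
  rw [abs_div, abs_mul, abs_of_nonneg (sqrt_nonneg 3), abs_of_pos (by norm_num : (0 : ℝ) < 3)] at h
  exact h.congr_of_eventuallyEq ((θf_cornerLine_eventuallyEq k).filter_mono nhdsWithin_le_nhds)
    (θf_cornerLine_eventuallyEq k).eq_of_nhds

theorem hasDerivWithinAt_θf_cornerLine_Iic :
    HasDerivWithinAt (fun ε => θf (cornerLine k ε)) (-(√3 * |1 + 2 * k| / 3)) (Iic 0) 0 := by
  have h := (hasDerivAt_arcsin_lodeSin_cornerLine k).hasDerivWithinAt_abs_Iic
    (by simp [lodeSin_cornerLine_zero])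
  rw [abs_div, abs_mul, abs_of_nonneg (sqrt_nonneg 3), abs_of_pos (by norm_num : (0 : ℝ) < 3)] at h
  exact h.congr_of_eventuallyEq ((θf_cornerLine_eventuallyEq k).filter_mono nhdsWithin_le_nhds)
    (θf_cornerLine_eventuallyEq k).eq_of_nhds

theorem hasDerivWithinAt_Gf_cornerLine {g : ℝ → ℝ} {gd0 c : ℝ} {s : Set ℝ}
    (hg0 : g 0 ≠ 0) (h0 : HasDerivWithinAt g gd0 (Ici 0) 0)
    (hθ : HasDerivWithinAt (fun ε => θf (cornerLine k ε)) c s 0) :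
    HasDerivWithinAt (fun ε => Gf g (cornerLine k ε))
      (3 / (2 * g 0) - 3 / 2 * gd0 * c / g 0 ^ 2) s 0 := by
  have hg : HasDerivWithinAt g gd0 (Ici 0) (θf (cornerLine k 0)) := by rwa [θf_cornerLine_zero]
  have hgθ := hg.comp 0 hθ fun ε _ => θf_nonneg (cornerLine k ε)
  refine ((hasDerivAt_qf_cornerLine k).hasDerivWithinAt.fun_div hgθ
    (by simpa [θf_cornerLine_zero] using hg0)).congr_deriv ?_
  simp only [Function.comp_apply, qf_cornerLine_zero, θf_cornerLine_zero]
  field_simp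

end cornerLine

theorem forall_add_le_sub_iff_nonpos {A B w d : ℝ} (hB : 0 < B) (hw : 0 < w) :
    (∀ k : ℝ, k ≠ -1 / 2 → A + B * |1 + 2 * k| * d / w ≤ A - B * |1 + 2 * k| * d / w) ↔
      d ≤ 0 := by
  constructor
  · intro h
    by_contra! hd
    have : 0 < B * |1 + 2 * (0 : ℝ)| * d / w := by norm_num; positivity
    linarith [h 0 (by norm_num)]
  · intro hd k _
    have : B * |1 + 2 * k| * d / w ≤ 0 :=
      div_nonpos_of_nonpos_of_nonneg (mul_nonpos_of_nonneg_of_nonpos (by positivity) hd) hw.le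
    linarith

theorem corner_at_theta_zero_general
    (g : ℝ → ℝ)
    (hgpos : ∀ t ∈ Set.Icc 0 (Real.pi / 3), 0 < g t)
    (gd0 : ℝ)
    (h0 : HasDerivWithinAt g gd0 (Set.Ici 0) 0)
    (k : ℝ) :
    HasDerivWithinAt (fun ε : ℝ => Gf g (1 + ε, -1 / 2 + k * ε))
      (3 / (2 * g 0) - (Real.sqrt 3 / 2) * |1 + 2 * k| * gd0 / (g 0) ^ 2)
      (Set.Ici 0) 0 ∧
    HasDerivWithinAt (fun ε : ℝ => Gf g (1 + ε, -1 / 2 + k * ε))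
      (3 / (2 * g 0) + (Real.sqrt 3 / 2) * |1 + 2 * k| * gd0 / (g 0) ^ 2)
      (Set.Iic 0) 0 ∧
    ((∀ k' : ℝ, k' ≠ -1 / 2 →
        3 / (2 * g 0) + (Real.sqrt 3 / 2) * |1 + 2 * k'| * gd0 / (g 0) ^ 2 ≤
        3 / (2 * g 0) - (Real.sqrt 3 / 2) * |1 + 2 * k'| * gd0 / (g 0) ^ 2) ↔
      gd0 ≤ 0) := by
  have hg0 : 0 < g 0 := hgpos 0 ⟨le_rfl, by positivity⟩
  refine ⟨?_, ?_, forall_add_le_sub_iff_nonpos (by positivity) (by positivity)⟩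
  · refine (hasDerivWithinAt_Gf_cornerLine k hg0.ne' h0
      (hasDerivWithinAt_θf_cornerLine_Ici k)).congr_deriv ?_
    ring
  · refine (hasDerivWithinAt_Gf_cornerLine k hg0.ne' h0
      (hasDerivWithinAt_θf_cornerLine_Iic k)).congr_deriv ?_
    ring

/-- One-sided derivatives of the restriction h(ε) = G(1+ε, −1/2+kε) of
G = q/g(θ) to a line through the point (1,−1/2) (on the axis θ = 0), for k ≠ −1/2:
h′±(0) = 3/(2g(0)) ∓ (√3/2)·|1+2k|·g′₊(0)/g(0)²; consequently h′₋(0) ≤ h′₊(0) holds for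
every such line iff g′₊(0) ≤ 0. -/
theorem corner_at_theta_zero
    (g : ℝ → ℝ)
    (hgc : ContinuousOn g (Set.Icc 0 (Real.pi / 3)))
    (hgpos : ∀ t ∈ Set.Icc 0 (Real.pi / 3), 0 < g t)
    (hgd : ∀ t ∈ Set.Ioo 0 (Real.pi / 3), DifferentiableAt ℝ g t)
    (gd0 gdpi : ℝ)
    (h0 : HasDerivWithinAt g gd0 (Set.Ici 0) 0)
    (hpi : HasDerivWithinAt g gdpi (Set.Iic (Real.pi / 3)) (Real.pi / 3))
    (k : ℝ) (hk : k ≠ -1 / 2) :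
    HasDerivWithinAt (fun ε : ℝ => Gf g (1 + ε, -1 / 2 + k * ε))
      (3 / (2 * g 0) - (Real.sqrt 3 / 2) * |1 + 2 * k| * gd0 / (g 0) ^ 2)
      (Set.Ici 0) 0 ∧
    HasDerivWithinAt (fun ε : ℝ => Gf g (1 + ε, -1 / 2 + k * ε))
      (3 / (2 * g 0) + (Real.sqrt 3 / 2) * |1 + 2 * k| * gd0 / (g 0) ^ 2)
      (Set.Iic 0) 0 ∧
    ((∀ k' : ℝ, k' ≠ -1 / 2 →
        3 / (2 * g 0) + (Real.sqrt 3 / 2) * |1 + 2 * k'| * gd0 / (g 0) ^ 2 ≤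
        3 / (2 * g 0) - (Real.sqrt 3 / 2) * |1 + 2 * k'| * gd0 / (g 0) ^ 2) ↔
      gd0 ≤ 0) :=
  corner_at_theta_zero_general g hgpos gd0 h0 k
end

section
/- (Convexity of nonsmooth deviatoric representation vs. convexity of the deviatoric section.) Let g : [0, π/3] → ℝ be continuous, strictly positive, twice differentiable on (0, π/3), and possess one-sided derivatives g′₊(0) at 0 and g′₋(π/3) at π/3. Then G = q/g(θ) is a convex function of (S₁,S₂) on ℝ² if and only if: g(θ)² + 2g′(θ)² − g(θ)g″(θ) ≥ 0 for all θ ∈ (0, π/3), g′₊(0) ≤ 0, and g′₋(π/3) ≥ 0. -/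
/-!
In the polar coordinates `S = (2r/3) (cos ψ, cos (ψ - 2π/3))` of the deviatoric plane one has
`q = r` and `θ = foldAngle ψ`, the distance from `ψ` to `(2π/3)ℤ`, so `G z = ‖z‖ k (arg z)` with
`k = 1 / (g ∘ foldAngle)`. A positively homogeneous function is convex iff its restriction to every
line is; on the line tangent to the unit circle at angle `α` this restriction is
`f t = √(1 + t²) k φ` with `φ = α + arctan t`, and `f'' = (k + k'') φ / (1 + t²)^(3/2)` as long as
`φ` avoids the kinks `(π/3)ℤ` of `foldAngle`. There `k + k'' = (g² + 2g'² - g g'') / g³`, while at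
the kinks `k'` jumps by `-2 g'₊(0) / g(0)²` or by `2 g'₋(π/3) / g(π/3)²`. Hence convexity of all
the `f` is equivalent to the three conditions: necessity is read off from `f''` and from the
one-sided derivatives of `f` at `t = 0`, sufficiency follows by gluing the convex pieces of `f`
across the kinks.
-/

open Real Set Filter Topology
open Complex (I)

/-! ### Convexity on the real line and along lines -/

lemma convexOn_univ_iff_forall_line {E : Type*} [AddCommGroup E] [Module ℝ E] {f : E → ℝ} :
    ConvexOn ℝ univ f ↔ ∀ x v : E, ConvexOn ℝ univ (fun s : ℝ => f (x + s • v)) := by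
  refine ⟨fun hf x v => ⟨convex_univ, fun s _ s' _ a b ha hb hab => ?_⟩,
    fun h => ⟨convex_univ, fun x _ y _ a b ha hb hab => ?_⟩⟩
  · convert hf.2 (mem_univ (x + s • v)) (mem_univ (x + s' • v)) ha hb hab using 2
    obtain rfl : a = 1 - b := by linarith
    module
  · convert (h x (y - x)).2 (mem_univ 0) (mem_univ 1) ha hb hab using 2 <;>
      simp only [smul_eq_mul, mul_zero, zero_add, mul_one, zero_smul, add_zero, one_smul,
        add_sub_cancel]
    obtain rfl : a = 1 - b := by linarith
    module

lemma convexOn_univ_comp_linearEquiv_iff {E F : Type*} [AddCommGroup E] [Module ℝ E]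
    [AddCommGroup F] [Module ℝ F] (e : E ≃ₗ[ℝ] F) {f : F → ℝ} :
    ConvexOn ℝ univ (f ∘ e) ↔ ConvexOn ℝ univ f := by
  refine ⟨fun h => ?_, fun h => by simpa using h.comp_linearMap e.toLinearMap⟩
  simpa [Function.comp_def] using h.comp_linearMap e.symm.toLinearMap

lemma ConvexOn.comp_add_mul {f : ℝ → ℝ} (hf : ConvexOn ℝ univ f) (a b : ℝ) :
    ConvexOn ℝ univ (fun s => f (a + b * s)) := by
  simpa [smul_eq_mul, mul_comm] using (convexOn_univ_iff_forall_line.1 hf) a b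

lemma slope_mem_Icc_of_slope_le {f : ℝ → ℝ} {p q r : ℝ} (hpq : p < q) (hqr : q < r)
    (h : slope f p q ≤ slope f q r) : slope f p r ∈ Icc (slope f p q) (slope f q r) := by
  rw [← sub_div_sub_smul_slope_add_sub_div_sub_smul_slope f p q r, smul_eq_mul, smul_eq_mul]
  have hw : (q - p) / (r - p) + (r - q) / (r - p) = 1 := by
    rw [← add_div, div_eq_one_iff_eq (by linarith)]; ring
  have h1 : 0 ≤ (q - p) / (r - p) := div_nonneg (by linarith) (by linarith)
  have h2 : 0 ≤ (r - q) / (r - p) := div_nonneg (by linarith) (by linarith)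
  constructor
  · linear_combination (-slope f p q) * hw + mul_nonneg h2 (sub_nonneg.2 h)
  · linear_combination (slope f q r) * hw + mul_nonneg h1 (sub_nonneg.2 h)

theorem ConvexOn.union_of_hasDerivWithinAt {f : ℝ → ℝ} {s t : Set ℝ} {e la ra : ℝ}
    (hs : ConvexOn ℝ s f) (ht : ConvexOn ℝ t f) (hse : IsGreatest s e) (hte : IsLeast t e)
    (hl : HasDerivWithinAt f la s e) (hr : HasDerivWithinAt f ra t e) (hlr : la ≤ ra) :
    ConvexOn ℝ (s ∪ t) f := by
  have hL (x : ℝ) (hx : x ∈ s) (hxe : x < e) : slope f x e ≤ la :=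
    hs.slope_le_of_hasDerivWithinAt hx hse.1 hxe hl
  have hR (z : ℝ) (hz : z ∈ t) (hez : e < z) : ra ≤ slope f e z :=
    ht.le_slope_of_hasDerivWithinAt hte.1 hz hez hr
  have hs_adj {x y z : ℝ} (hx : x ∈ s) (hz : z ∈ s) (hxy : x < y) (hyz : y < z) :
      slope f x y ≤ slope f y z := by
    simpa only [slope_def_field] using hs.slope_mono_adjacent hx hz hxy hyz
  have ht_adj {x y z : ℝ} (hx : x ∈ t) (hz : z ∈ t) (hxy : x < y) (hyz : y < z) :
      slope f x y ≤ slope f y z := by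
    simpa only [slope_def_field] using ht.slope_mono_adjacent hx hz hxy hyz
  have hconv : Convex ℝ (s ∪ t) := by
    refine convex_iff_ordConnected.2 ⟨fun x hx z hz u hu => ?_⟩
    rcases le_total u e with hue | heu
    · left
      rcases hx with hx | hx
      · exact hs.1.ordConnected.out hx hse.1 ⟨hu.1, hue⟩
      · exact le_antisymm hue ((hte.2 hx).trans hu.1) ▸ hse.1
    · right
      rcases hz with hz | hz
      · exact le_antisymm (hu.2.trans (hse.2 hz)) heu ▸ hte.1
      · exact ht.1.ordConnected.out hte.1 hz ⟨heu, hu.2⟩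
  refine convexOn_of_slope_mono_adjacent hconv fun {x y z} hx hz hxy hyz => ?_
  simp only [← slope_def_field]
  rcases le_or_gt z e with hze | hez
  · have hxs : x ∈ s := hx.resolve_right fun hxt => by linarith [hte.2 hxt]
    have hzs : z ∈ s := hz.elim id fun hzt => le_antisymm hze (hte.2 hzt) ▸ hse.1
    exact hs_adj hxs hzs hxy hyz
  rcases le_or_gt e x with hex | hxe
  · have hzt : z ∈ t := hz.resolve_left fun hzs => by linarith [hse.2 hzs]
    have hxt : x ∈ t := hx.elim (fun hxs => le_antisymm (hse.2 hxs) hex ▸ hte.1) id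
    exact ht_adj hxt hzt hxy hyz
  have hxs : x ∈ s := hx.resolve_right fun hxt => by linarith [hte.2 hxt]
  have hzt : z ∈ t := hz.resolve_left fun hzs => by linarith [hse.2 hzs]
  rcases lt_trichotomy y e with hye | rfl | hey
  · have hys : y ∈ s := hs.1.ordConnected.out hxs hse.1 ⟨hxy.le, hye.le⟩
    have hyez := (hL y hys hye).trans (hlr.trans (hR z hzt hez))
    exact (hs_adj hxs hse.1 hxy hye).trans (slope_mem_Icc_of_slope_le hye hez hyez).1
  · exact (hL x hxs hxy).trans (hlr.trans (hR z hzt hyz))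
  · have hyt : y ∈ t := ht.1.ordConnected.out hte.1 hzt ⟨hey.le, hyz.le⟩
    have hxey := (hL x hxs hxe).trans (hlr.trans (hR y hyt hey))
    exact (slope_mem_Icc_of_slope_le hxe hey hxey).2.trans (ht_adj hte.1 hzt hey hyz)

/-! ### Positively homogeneous functions on `ℂ` -/

noncomputable def homExt (k : ℝ → ℝ) (z : ℂ) : ℝ := ‖z‖ * k z.arg

/-- `homExt k` along the line `t ↦ exp (α I) (1 + t I)`, tangent to the unit circle at `α`. -/
noncomputable def homExtLine (k : ℝ → ℝ) (α t : ℝ) : ℝ :=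
  √(1 + t ^ 2) * k (α + arctan t)

lemma exp_mul_one_add_mul_I (α t : ℝ) :
    Complex.exp (α * I) * (1 + t * I) =
      (√(1 + t ^ 2) : ℝ) * Complex.exp ((α + arctan t : ℝ) * I) := by
  have harc : (√(1 + t ^ 2) : ℂ) * Complex.exp (arctan t * I) = 1 + t * I := by
    rw [Complex.exp_mul_I, ← Complex.ofReal_cos, ← Complex.ofReal_sin, cos_arctan, sin_arctan]
    apply Complex.ext <;> simp <;> field_simp
  rw [Complex.ofReal_add, add_mul, Complex.exp_add, mul_left_comm, harc]

section HomExt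

variable {k : ℝ → ℝ}

lemma homExt_ofReal_mul {c : ℝ} (hc : 0 ≤ c) (z : ℂ) :
    homExt k (c * z) = c * homExt k z := by
  rcases hc.eq_or_lt with rfl | hc
  · simp [homExt]
  · rw [homExt, homExt, norm_mul, Complex.norm_real, Real.norm_of_nonneg hc.le,
      Complex.arg_real_mul _ hc, mul_assoc]

lemma homExt_ofReal_mul_exp (hk : Function.Periodic k (2 * π)) {r : ℝ} (hr : 0 ≤ r)
    (ψ : ℝ) :
    homExt k (r * Complex.exp (ψ * I)) = r * k ψ := by
  rw [homExt_ofReal_mul hr, homExt, Complex.norm_exp_ofReal_mul_I, one_mul,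
    Complex.arg_exp_mul_I, toIocMod, hk.sub_zsmul_eq]

lemma homExt_exp_mul_one_add_mul_I (hk : Function.Periodic k (2 * π)) (α t : ℝ) :
    homExt k (Complex.exp (α * I) * (1 + t * I)) = homExtLine k α t := by
  rw [exp_mul_one_add_mul_I, homExt_ofReal_mul_exp hk (sqrt_nonneg _), homExtLine]

lemma convexOn_homExt_ofReal_mul (hk0 : ∀ ψ, 0 ≤ k ψ) (v : ℂ) :
    ConvexOn ℝ univ (fun τ : ℝ => homExt k (τ * v)) := by
  have hv (z : ℂ) : 0 ≤ homExt k z := mul_nonneg (norm_nonneg z) (hk0 _)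
  have hmax : (fun τ : ℝ => homExt k (τ * v)) =
      (fun τ => τ * homExt k v) ⊔ (fun τ => -τ * homExt k (-v)) := by
    funext τ
    rcases le_total 0 τ with hτ | hτ
    · rw [homExt_ofReal_mul hτ, Pi.sup_apply, left_eq_sup]
      nlinarith [hv v, hv (-v)]
    · rw [show (τ : ℂ) * v = ((-τ : ℝ) : ℂ) * -v by push_cast; ring,
        homExt_ofReal_mul (neg_nonneg.2 hτ), Pi.sup_apply, right_eq_sup]
      nlinarith [hv v, hv (-v)]
  rw [hmax]
  exact (LinearMap.convexOn (LinearMap.smulRight LinearMap.id (homExt k v)) convex_univ).sup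
    (LinearMap.convexOn (LinearMap.smulRight LinearMap.id (-homExt k (-v))) convex_univ)
      |>.congr fun τ _ => by simp [mul_comm]

lemma convexOn_homExt_iff (hk : Function.Periodic k (2 * π)) (hk0 : ∀ ψ, 0 ≤ k ψ) :
    ConvexOn ℝ univ (homExt k) ↔ ∀ α, ConvexOn ℝ univ (homExtLine k α) := by
  rw [convexOn_univ_iff_forall_line]
  refine ⟨fun h α => ?_, fun h x v => ?_⟩
  · convert h (Complex.exp (α * I)) (Complex.exp (α * I) * I) using 2 with t
    rw [← homExt_exp_mul_one_add_mul_I hk, Complex.real_smul]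
    ring_nf
  rcases eq_or_ne v 0 with rfl | hv
  · simpa using convexOn_const (homExt k x) convex_univ
  set w := x / v
  have hx : x = (w.re + w.im * I) * v := by rw [Complex.re_add_im, div_mul_cancel₀ x hv]
  by_cases hc : w.im = 0
  · have hray (s : ℝ) : x + s • v = ((w.re + 1 * s : ℝ) : ℂ) * v := by
      rw [hx, hc, Complex.real_smul]; push_cast; ring
    simp_rw [hray]
    exact (convexOn_homExt_ofReal_mul hk0 v).comp_add_mul w.re 1
  -- `P` is the foot of the perpendicular from `0` to the line, which misses `0`.
  set P : ℂ := w.im * I * v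
  have hline (s : ℝ) : homExt k (x + s • v) =
      ‖P‖ * homExtLine k P.arg (-(w.re / w.im) + -(1 / w.im) * s) := by
    rw [← homExt_exp_mul_one_add_mul_I hk, ← homExt_ofReal_mul (norm_nonneg P), ← mul_assoc,
      Complex.norm_mul_exp_arg_mul_I, hx, Complex.real_smul]
    congr 1
    have hc' : (w.im : ℂ) ≠ 0 := Complex.ofReal_ne_zero.2 hc
    simp only [P]
    push_cast
    field_simp
    linear_combination (w.re + s : ℂ) * Complex.I_sq
  simp_rw [hline]
  exact ((h P.arg).comp_add_mul _ _).smul (norm_nonneg P)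

end HomExt

/-! ### Convexity of `homExtLine` from the local behaviour of the profile -/

lemma hasDerivAt_sqrt_one_add_sq (t : ℝ) :
    HasDerivAt (fun τ : ℝ => √(1 + τ ^ 2)) (t / √(1 + t ^ 2)) t := by
  convert ((hasDerivAt_pow 2 t).const_add 1).sqrt (by positivity) using 1
  norm_num
  ring

noncomputable def homExtLineDeriv (k : ℝ → ℝ) (α t : ℝ) : ℝ :=
  (t * k (α + arctan t) + deriv k (α + arctan t)) / √(1 + t ^ 2)

lemma convex_setOf_add_arctan_mem {s : Set ℝ} (hs : s.OrdConnected) (α : ℝ) :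
    Convex ℝ {t | α + arctan t ∈ s} :=
  convex_iff_ordConnected.2 <|
    hs.preimage_mono fun _ _ h => (add_le_add_iff_left α).2 (arctan_strictMono.monotone h)

section HomExtLine

variable {k : ℝ → ℝ} {α : ℝ}

lemma hasDerivWithinAt_homExtLine {k' t : ℝ} {s u : Set ℝ}
    (hk : HasDerivWithinAt k k' s (α + arctan t)) (hmaps : MapsTo (fun τ => α + arctan τ) u s) :
    HasDerivWithinAt (homExtLine k α) ((t * k (α + arctan t) + k') / √(1 + t ^ 2)) u t := by
  have hφ := ((hasDerivAt_arctan t).const_add α).hasDerivWithinAt (s := u)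
  refine ((hasDerivAt_sqrt_one_add_sq t).hasDerivWithinAt.mul
    (hk.comp t hφ hmaps)).congr_deriv ?_
  have hs2 : √(1 + t ^ 2) ^ 2 = 1 + t ^ 2 := sq_sqrt (by positivity)
  simp only [Function.comp_apply]
  field_simp
  linear_combination k' * hs2

lemma hasDerivAt_homExtLineDeriv {t : ℝ} (hk : DifferentiableAt ℝ k (α + arctan t))
    (hk' : DifferentiableAt ℝ (deriv k) (α + arctan t)) :
    HasDerivAt (homExtLineDeriv k α)
      ((k (α + arctan t) + deriv (deriv k) (α + arctan t)) / √(1 + t ^ 2) ^ 3) t := by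
  have hφ := (hasDerivAt_arctan t).const_add α
  have hs : 0 < √(1 + t ^ 2) := sqrt_pos.2 (by positivity)
  refine ((((hasDerivAt_id t).mul (hk.hasDerivAt.comp t hφ)).add
    (hk'.hasDerivAt.comp t hφ)).div (hasDerivAt_sqrt_one_add_sq t) hs.ne').congr_deriv ?_
  have hs2 : √(1 + t ^ 2) ^ 2 = 1 + t ^ 2 := sq_sqrt (by positivity)
  simp only [Pi.add_apply, Pi.mul_apply, Function.comp_apply, id]
  field_simp
  linear_combination (k (α + arctan t) * (1 + t ^ 2) + t * deriv k (α + arctan t) +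
    deriv (deriv k) (α + arctan t)) * hs2

lemma convexOn_homExtLine_of_curvature {a b : ℝ} (hk : ContinuousOn k (Icc a b))
    (hcurv : ∀ φ ∈ Ioo a b, DifferentiableAt ℝ k φ ∧ DifferentiableAt ℝ (deriv k) φ ∧
      0 ≤ k φ + deriv (deriv k) φ) :
    ConvexOn ℝ {t | α + arctan t ∈ Icc a b} (homExtLine k α) := by
  have hint (t : ℝ) (ht : t ∈ interior {t | α + arctan t ∈ Icc a b}) :
      α + arctan t ∈ Ioo a b := by
    obtain ⟨ε, hε, hball⟩ := Metric.mem_nhds_iff.1 (mem_interior_iff_mem_nhds.1 ht)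
    have hl : α + arctan (t - ε / 2) ∈ Icc a b := hball (by simp [abs_of_pos, hε])
    have hr : α + arctan (t + ε / 2) ∈ Icc a b := hball (by simp [abs_of_pos, hε])
    have := arctan_strictMono (show t - ε / 2 < t by linarith)
    have := arctan_strictMono (show t < t + ε / 2 by linarith)
    exact ⟨by linarith [hl.1], by linarith [hr.2]⟩
  refine convexOn_of_hasDerivWithinAt2_nonneg (convex_setOf_add_arctan_mem ordConnected_Icc α)
    (f' := homExtLineDeriv k α)
    (f'' := fun t => (k (α + arctan t) + deriv (deriv k) (α + arctan t)) / √(1 + t ^ 2) ^ 3)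
    ?_ (fun t ht => ?_) (fun t ht => ?_) (fun t ht => ?_)
  · exact (continuous_sqrt.comp (by fun_prop)).continuousOn.mul
      (hk.comp (by fun_prop) fun t ht => ht)
  · exact hasDerivWithinAt_homExtLine
      ((hcurv _ (hint t ht)).1.hasDerivAt.hasDerivWithinAt (s := univ)) (mapsTo_univ _ _)
  · exact (hasDerivAt_homExtLineDeriv (hcurv _ (hint t ht)).1
      (hcurv _ (hint t ht)).2.1).hasDerivWithinAt
  · exact div_nonneg (hcurv _ (hint t ht)).2.2 (by positivity)

lemma ConvexOn.homExtLine_glue {c d kl kr : ℝ} (hc : c - α ∈ Ioo (-(π / 2)) (π / 2))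
    (hcd : c ≤ d) (hle : ConvexOn ℝ {t | α + arctan t ≤ c} (homExtLine k α))
    (hmem : ConvexOn ℝ {t | α + arctan t ∈ Icc c d} (homExtLine k α))
    (hl : HasDerivWithinAt k kl (Iic c) c) (hr : HasDerivWithinAt k kr (Ici c) c)
    (hlr : kl ≤ kr) :
    ConvexOn ℝ {t | α + arctan t ≤ d} (homExtLine k α) := by
  set t₀ := tan (c - α)
  have ht₀ : α + arctan t₀ = c := by rw [arctan_tan hc.1 hc.2]; ring
  have hunion : {t | α + arctan t ≤ d} =
      {t | α + arctan t ≤ c} ∪ {t | α + arctan t ∈ Icc c d} := by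
    ext t
    simp only [mem_ofPred_eq, mem_union, mem_Icc]
    constructor
    · intro h
      rcases le_total (α + arctan t) c with h' | h'
      · exact Or.inl h'
      · exact Or.inr ⟨h', h⟩
    · rintro (h | h)
      · linarith
      · exact h.2
  rw [← ht₀] at hl hr
  rw [hunion]
  refine hle.union_of_hasDerivWithinAt hmem ⟨ht₀.le, fun t ht => ?_⟩
    ⟨⟨ht₀.ge, by linarith⟩, fun t ht => ?_⟩
    (hasDerivWithinAt_homExtLine hl fun t ht => ht₀ ▸ ht)
    (hasDerivWithinAt_homExtLine hr fun t ht => ht₀ ▸ ht.1)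
    (div_le_div_of_nonneg_right (by linarith) (sqrt_nonneg _))
  · exact arctan_strictMono.le_iff_le.1 (by linarith [show α + arctan t ≤ c from ht])
  · exact arctan_strictMono.le_iff_le.1 (by linarith [ht.1])

theorem convexOn_homExtLine_of_kinks {p : ℝ} (hp : 0 < p) (hk : Continuous k)
    (hcurv : ∀ n : ℤ, ∀ φ ∈ Ioo (n * p) ((n + 1) * p), DifferentiableAt ℝ k φ ∧
      DifferentiableAt ℝ (deriv k) φ ∧ 0 ≤ k φ + deriv (deriv k) φ)
    (hkink : ∀ n : ℤ, ∃ kl kr, HasDerivWithinAt k kl (Iic (n * p)) (n * p) ∧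
      HasDerivWithinAt k kr (Ici (n * p)) (n * p) ∧ kl ≤ kr) :
    ConvexOn ℝ univ (homExtLine k α) := by
  have hpiece (n : ℤ) :
      ConvexOn ℝ {t | α + arctan t ∈ Icc (n * p) ((n + 1) * p)} (homExtLine k α) :=
    convexOn_homExtLine_of_curvature hk.continuousOn (hcurv n)
  -- glue the pieces from left to right, starting with the one that contains `α - π / 2`
  set n₀ := ⌊(α - π / 2) / p⌋
  have hn₀ : n₀ * p ≤ α - π / 2 := (le_div_iff₀ hp).1 (Int.floor_le _)
  have hn₀' : α - π / 2 < (n₀ + 1) * p := (div_lt_iff₀ hp).1 (Int.lt_floor_add_one _)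
  have hstep (m : ℕ) :
      ConvexOn ℝ {t | α + arctan t ≤ (n₀ + m + 1) * p} (homExtLine k α) := by
    induction m with
    | zero =>
      refine (hpiece n₀).subset (fun t ht => ⟨?_, by simpa using ht⟩)
        (convex_setOf_add_arctan_mem ordConnected_Iic α)
      linarith [neg_pi_div_two_lt_arctan t]
    | succ m ih =>
      set c := (n₀ + m + 1) * p
      rw [show (n₀ + ((m + 1 : ℕ) : ℝ) + 1) * p = c + p by push_cast; ring]
      by_cases hc : α + π / 2 ≤ c
      · convert ih using 1
        ext t
        simp only [mem_ofPred_eq]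
        constructor <;> intro <;> linarith [arctan_lt_pi_div_two t]
      have hcast : ((n₀ + m + 1 : ℤ) : ℝ) * p = c := by push_cast; ring
      obtain ⟨kl, kr, hl, hr, hlr⟩ := hkink (n₀ + m + 1)
      have hnext := hpiece (n₀ + m + 1)
      rw [hcast] at hl hr
      rw [hcast, show (((n₀ + m + 1 : ℤ) : ℝ) + 1) * p = c + p by push_cast; ring] at hnext
      refine ih.homExtLine_glue ⟨?_, by linarith⟩ (by linarith) hnext hl hr hlr
      have : (n₀ + 1) * p ≤ c := by simp only [c]; nlinarith [(m.cast_nonneg : (0 : ℝ) ≤ m)]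
      linarith
  obtain ⟨m, hm⟩ : ∃ m : ℕ, π ≤ m * p :=
    ⟨⌈π / p⌉₊, (div_le_iff₀ hp).1 (Nat.le_ceil _)⟩
  convert hstep m
  ext t
  simp only [mem_univ, mem_ofPred_eq, true_iff]
  linarith [arctan_lt_pi_div_two t]

lemma ConvexOn.homExtLine_kink_le {kl kr : ℝ} (h : ConvexOn ℝ univ (homExtLine k α))
    (hl : HasDerivWithinAt k kl (Iic α) α) (hr : HasDerivWithinAt k kr (Ici α) α) :
    kl ≤ kr := by
  rw [← add_zero α, ← arctan_zero] at hl hr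
  have hl' := hasDerivWithinAt_homExtLine hl (u := Iic 0) fun t (ht : t ≤ 0) =>
    (add_le_add_iff_left α).2 (arctan_strictMono.monotone ht)
  have hr' := hasDerivWithinAt_homExtLine hr (u := Ici 0) fun t (ht : 0 ≤ t) =>
    (add_le_add_iff_left α).2 (arctan_strictMono.monotone ht)
  have := h.leftDeriv_le_rightDeriv_of_mem_interior (x := 0) (by simp)
  rw [(hl'.mono Iio_subset_Iic_self).derivWithin (uniqueDiffWithinAt_Iio 0),
    (hr'.mono Ioi_subset_Ici_self).derivWithin (uniqueDiffWithinAt_Ioi 0)] at this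
  simpa using this

lemma ConvexOn.homExtLine_curvature_nonneg (h : ConvexOn ℝ univ (homExtLine k α))
    (hk : ∀ᶠ φ in 𝓝 α, DifferentiableAt ℝ k φ)
    (hk' : DifferentiableAt ℝ (deriv k) α) :
    0 ≤ k α + deriv (deriv k) α := by
  have hev : ∀ᶠ t in 𝓝 0, DifferentiableAt ℝ k (α + arctan t) :=
    ((continuous_const.add continuous_arctan).tendsto' (0 : ℝ) α (by simp)).eventually hk
  obtain ⟨a, b, hab, hsub⟩ := mem_nhds_iff_exists_Ioo_subset.1 hev
  have hderiv (t : ℝ) (ht : t ∈ Ioo a b) :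
      HasDerivAt (homExtLine k α) (homExtLineDeriv k α t) t :=
    hasDerivWithinAt_univ.1 <| hasDerivWithinAt_homExtLine
      ((hsub ht).hasDerivAt.hasDerivWithinAt (s := univ)) (mapsTo_univ _ _)
  have hmono : MonotoneOn (homExtLineDeriv k α) (Ioo a b) :=
    ((h.subset (subset_univ _) (convex_Ioo a b)).monotoneOn_deriv
      fun t ht => (hderiv t ht).differentiableAt).congr fun t ht => (hderiv t ht).deriv
  have hacc : AccPt (0 : ℝ) (𝓟 (Ioo a b)) :=
    accPt_iff_frequently_nhdsNE.2
      (eventually_nhdsWithin_of_eventually_nhds (Ioo_mem_nhds hab.1 hab.2)).frequently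
  have h2 := hasDerivAt_homExtLineDeriv (α := α) (t := 0) (hsub hab)
    (by rwa [arctan_zero, add_zero])
  simpa using h2.hasDerivWithinAt.nonneg_of_monotoneOn hacc hmono

end HomExtLine

/-! ### The Lode angle and the deviatoric coordinates -/

/-- The Lode angle of the direction `ψ`: the distance from `ψ` to `(2π/3)ℤ`. -/
noncomputable def foldAngle (ψ : ℝ) : ℝ := (1 / 3) * arccos (Real.cos (3 * ψ))

lemma foldAngle_mem_Icc (ψ : ℝ) : foldAngle ψ ∈ Icc 0 (π / 3) := by
  have := arccos_le_pi (Real.cos (3 * ψ))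
  constructor <;> unfold foldAngle <;> linarith [arccos_nonneg (Real.cos (3 * ψ))]

lemma foldAngle_of_mem_Icc {ψ : ℝ} (h : ψ ∈ Icc 0 (π / 3)) : foldAngle ψ = ψ := by
  rw [foldAngle, arccos_cos (by linarith [h.1]) (by linarith [h.2])]
  ring

lemma foldAngle_neg (ψ : ℝ) : foldAngle (-ψ) = foldAngle ψ := by
  rw [foldAngle, foldAngle, mul_neg, Real.cos_neg]

lemma foldAngle_periodic : Function.Periodic foldAngle (2 * π / 3) := fun ψ => by
  rw [foldAngle, foldAngle, show 3 * (ψ + 2 * π / 3) = 3 * ψ + 2 * π by ring,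
    Real.cos_add_two_pi]

lemma continuous_foldAngle : Continuous foldAngle := by
  unfold foldAngle
  fun_prop

lemma foldAngle_eq_sub_int_mul {ψ : ℝ} (m : ℤ) (h : ψ - m * (2 * π / 3) ∈ Icc 0 (π / 3)) :
    foldAngle ψ = ψ - m * (2 * π / 3) := by
  rw [← foldAngle_periodic.sub_int_mul_eq m, foldAngle_of_mem_Icc h]

lemma foldAngle_eq_int_mul_sub {ψ : ℝ} (m : ℤ) (h : m * (2 * π / 3) - ψ ∈ Icc 0 (π / 3)) :
    foldAngle ψ = m * (2 * π / 3) - ψ := by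
  rw [← foldAngle_neg, ← foldAngle_periodic.int_mul m, neg_add_eq_sub, foldAngle_of_mem_Icc h]

lemma exists_foldAngle_eq_affine (n : ℤ) : ∃ σ κ : ℝ, (σ = 1 ∨ σ = -1) ∧
    ∀ ψ ∈ Icc (n * (π / 3)) ((n + 1) * (π / 3)), foldAngle ψ = σ * ψ + κ := by
  obtain ⟨m, rfl | rfl⟩ := Int.even_or_odd' n
  · refine ⟨1, -(m * (2 * π / 3)), Or.inl rfl, fun ψ hψ => ?_⟩
    push_cast at hψ
    rw [foldAngle_eq_sub_int_mul m ⟨by linarith [hψ.1], by linarith [hψ.2]⟩]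
    ring
  · refine ⟨-1, (m + 1 : ℤ) * (2 * π / 3), Or.inr rfl, fun ψ hψ => ?_⟩
    push_cast at hψ ⊢
    rw [foldAngle_eq_int_mul_sub (m + 1)
      ⟨by push_cast; linarith [hψ.2], by push_cast; linarith [hψ.1]⟩]
    push_cast
    ring

lemma foldAngle_mem_Ioo {n : ℤ} {ψ : ℝ}
    (hψ : ψ ∈ Ioo (n * (π / 3)) ((n + 1) * (π / 3))) :
    foldAngle ψ ∈ Ioo 0 (π / 3) := by
  obtain ⟨σ, κ, hσ, hfold⟩ := exists_foldAngle_eq_affine n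
  have ha := hfold _ ⟨le_rfl, by linarith [hψ.1, hψ.2]⟩
  have hb := hfold _ ⟨by linarith [hψ.1, hψ.2], le_rfl⟩
  have hpa := foldAngle_mem_Icc (n * (π / 3))
  have hpb := foldAngle_mem_Icc ((n + 1) * (π / 3))
  rw [hfold ψ ⟨hψ.1.le, hψ.2.le⟩]
  rcases hσ with rfl | rfl <;> constructor <;> linarith [hψ.1, hψ.2, hpa.1, hpa.2, hpb.1, hpb.2]

/-- `devEquiv (r * exp (ψ I)) = (2r/3) (cos ψ, cos (ψ - 2π/3))`. -/
noncomputable def devEquiv : ℂ ≃ₗ[ℝ] ℝ × ℝ where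
  toFun z := (2 / 3 * z.re, -(1 / 3) * z.re + √3 / 3 * z.im)
  invFun S := ⟨3 / 2 * S.1, √3 * (S.2 + S.1 / 2)⟩
  map_add' z w := by
    simp only [Complex.add_re, Complex.add_im, Prod.mk_add_mk]
    ring_nf
  map_smul' c z := by
    simp only [Complex.smul_re, Complex.smul_im, smul_eq_mul, RingHom.id_apply, Prod.smul_mk]
    ring_nf
  left_inv z := by
    have h3 : √3 * √3 = 3 := Real.mul_self_sqrt (by norm_num)
    apply Complex.ext
    · simp only
      ring
    · simp only
      linear_combination (z.im / 3) * h3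
  right_inv S := by
    have h3 : √3 * √3 = 3 := Real.mul_self_sqrt (by norm_num)
    ext
    · simp only
      ring
    · simp only
      linear_combination (S.2 + S.1 / 2) / 3 * h3

lemma qf_devEquiv (z : ℂ) : qf (devEquiv z) = ‖z‖ := by
  have h3 : √3 * √3 = 3 := Real.mul_self_sqrt (by norm_num)
  rw [qf, Complex.norm_def, Complex.normSq_apply]
  congr 1
  simp only [devEquiv, LinearEquiv.coe_mk, LinearMap.coe_mk, AddHom.coe_mk]
  linear_combination (z.im ^ 2 / 3) * h3

lemma θf_devEquiv {z : ℂ} (hz : z ≠ 0) : θf (devEquiv z) = foldAngle z.arg := by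
  have h3 : √3 * √3 = 3 := Real.mul_self_sqrt (by norm_num)
  have hsq : ‖z‖ ^ 2 = z.re ^ 2 + z.im ^ 2 := by
    rw [Complex.sq_norm, Complex.normSq_apply]
    ring
  rw [θf, qf_devEquiv, foldAngle, Real.cos_three_mul, Complex.cos_arg hz]
  congr 2
  simp only [devEquiv, LinearEquiv.coe_mk, LinearMap.coe_mk, AddHom.coe_mk]
  field_simp
  linear_combination (-27 * z.re * z.im ^ 2) * h3 + 81 * z.re * hsq

/-! ### The angular profile `1 / (g ∘ foldAngle)` -/

noncomputable def devProfile (g : ℝ → ℝ) (ψ : ℝ) : ℝ := (g (foldAngle ψ))⁻¹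

lemma Gf_devEquiv (g : ℝ → ℝ) (z : ℂ) : Gf g (devEquiv z) = homExt (devProfile g) z := by
  rcases eq_or_ne z 0 with rfl | hz
  · simp [Gf, homExt, qf]
  · rw [Gf, qf_devEquiv, θf_devEquiv hz, homExt, devProfile, div_eq_mul_inv]

section Profile

variable {g : ℝ → ℝ}

lemma convexOn_Gf_iff (hgpos : ∀ t ∈ Icc 0 (π / 3), 0 < g t) :
    ConvexOn ℝ univ (Gf g) ↔ ∀ α, ConvexOn ℝ univ (homExtLine (devProfile g) α) := by
  have hper : Function.Periodic (devProfile g) (2 * π) := fun ψ => by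
    have := foldAngle_periodic.nat_mul 3 ψ
    rw [show ((3 : ℕ) : ℝ) * (2 * π / 3) = 2 * π by push_cast; ring] at this
    rw [devProfile, devProfile, this]
  rw [← convexOn_univ_comp_linearEquiv_iff devEquiv, Function.comp_def]
  simp_rw [Gf_devEquiv]
  exact convexOn_homExt_iff hper fun ψ => (inv_pos.2 (hgpos _ (foldAngle_mem_Icc ψ))).le

lemma continuous_devProfile (hgc : ContinuousOn g (Icc 0 (π / 3)))
    (hgpos : ∀ t ∈ Icc 0 (π / 3), 0 < g t) : Continuous (devProfile g) :=
  (hgc.comp_continuous continuous_foldAngle foldAngle_mem_Icc).inv₀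
    fun ψ => (hgpos _ (foldAngle_mem_Icc ψ)).ne'

lemma hasDerivWithinAt_devProfile {a b σ κ ψ v d : ℝ}
    (hfold : ∀ φ ∈ Icc a b, foldAngle φ = σ * φ + κ) (hψ : ψ ∈ Icc a b)
    (hv : σ * ψ + κ = v)
    (hg : HasDerivWithinAt g d (Icc 0 (π / 3)) v) (hne : g v ≠ 0) :
    HasDerivWithinAt (devProfile g) (-(d * σ) / g v ^ 2) (Icc a b) ψ := by
  have haff : HasDerivAt (fun φ => σ * φ + κ) σ ψ := by
    simpa using ((hasDerivAt_id ψ).const_mul σ).add_const κ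
  subst hv
  have h := (hg.comp ψ haff.hasDerivWithinAt fun φ hφ =>
    hfold φ hφ ▸ foldAngle_mem_Icc φ).inv hne
  exact h.congr (fun φ hφ => by simp [devProfile, hfold φ hφ])
    (by simp [devProfile, hfold ψ hψ])

lemma hasDerivAt_deriv_inv_comp_affine {σ κ ψ : ℝ} (hσ : σ = 1 ∨ σ = -1)
    (hg : DifferentiableAt ℝ g (σ * ψ + κ))
    (hg' : DifferentiableAt ℝ (deriv g) (σ * ψ + κ))
    (hne : g (σ * ψ + κ) ≠ 0) :
    HasDerivAt (fun φ => -(deriv g (σ * φ + κ) * σ) / g (σ * φ + κ) ^ 2)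
      ((2 * deriv g (σ * ψ + κ) ^ 2 - g (σ * ψ + κ) * deriv (deriv g) (σ * ψ + κ)) /
        g (σ * ψ + κ) ^ 3) ψ := by
  have haff : HasDerivAt (fun φ => σ * φ + κ) σ ψ := by
    simpa using ((hasDerivAt_id ψ).const_mul σ).add_const κ
  have h := (((hg'.hasDerivAt.comp ψ haff).mul_const σ).neg).div
    ((hg.hasDerivAt.comp ψ haff).pow 2) (pow_ne_zero 2 hne)
  refine h.congr_deriv ?_
  simp only [Function.comp_apply, Pi.pow_apply, Pi.neg_apply]
  set θ := σ * ψ + κ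
  have hσ2 : σ ^ 2 = 1 := by rcases hσ with rfl | rfl <;> norm_num
  field_simp
  linear_combination (2 * g θ * deriv g θ ^ 2 - g θ ^ 2 * deriv (deriv g) θ) * hσ2

lemma devProfile_curvature (hgpos : ∀ t ∈ Icc 0 (π / 3), 0 < g t)
    (hgd : ∀ t ∈ Ioo 0 (π / 3), DifferentiableAt ℝ g t ∧ DifferentiableAt ℝ (deriv g) t)
    {n : ℤ} {φ : ℝ} (hφ : φ ∈ Ioo (n * (π / 3)) ((n + 1) * (π / 3))) :
    DifferentiableAt ℝ (devProfile g) φ ∧ DifferentiableAt ℝ (deriv (devProfile g)) φ ∧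
      devProfile g φ + deriv (deriv (devProfile g)) φ =
        (g (foldAngle φ) ^ 2 + 2 * deriv g (foldAngle φ) ^ 2 -
          g (foldAngle φ) * deriv (deriv g) (foldAngle φ)) / g (foldAngle φ) ^ 3 := by
  obtain ⟨σ, κ, hσ, hfold⟩ := exists_foldAngle_eq_affine n
  have hθ (ψ : ℝ) (hψ : ψ ∈ Ioo (n * (π / 3)) ((n + 1) * (π / 3))) :
      σ * ψ + κ ∈ Ioo 0 (π / 3) :=
    hfold ψ (Ioo_subset_Icc_self hψ) ▸ foldAngle_mem_Ioo hψ
  have hne (ψ : ℝ) (hψ : ψ ∈ Ioo (n * (π / 3)) ((n + 1) * (π / 3))) :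
      g (σ * ψ + κ) ≠ 0 :=
    (hgpos _ (Ioo_subset_Icc_self (hθ ψ hψ))).ne'
  have hderiv (ψ : ℝ) (hψ : ψ ∈ Ioo (n * (π / 3)) ((n + 1) * (π / 3))) :
      HasDerivAt (devProfile g) (-(deriv g (σ * ψ + κ) * σ) / g (σ * ψ + κ) ^ 2) ψ :=
    (hasDerivWithinAt_devProfile hfold (Ioo_subset_Icc_self hψ) rfl
      (hgd _ (hθ ψ hψ)).1.hasDerivAt.hasDerivWithinAt (hne ψ hψ)).hasDerivAt
      (Icc_mem_nhds hψ.1 hψ.2)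
  have h2 := (hasDerivAt_deriv_inv_comp_affine hσ (hgd _ (hθ φ hφ)).1 (hgd _ (hθ φ hφ)).2
    (hne φ hφ)).congr_of_eventuallyEq
      (eventually_of_mem (Ioo_mem_nhds hφ.1 hφ.2) fun ψ hψ => (hderiv ψ hψ).deriv)
  refine ⟨(hderiv φ hφ).differentiableAt, h2.differentiableAt, ?_⟩
  rw [h2.deriv, devProfile, hfold φ (Ioo_subset_Icc_self hφ)]
  field_simp [hne φ hφ]
  ring

lemma hasDerivWithinAt_devProfile_even_kink {gd0 : ℝ} (h0 : HasDerivWithinAt g gd0 (Ici 0) 0)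
    (hg0 : g 0 ≠ 0) (m : ℤ) :
    HasDerivWithinAt (devProfile g) (gd0 / g 0 ^ 2) (Iic (m * (2 * π / 3))) (m * (2 * π / 3)) ∧
      HasDerivWithinAt (devProfile g) (-gd0 / g 0 ^ 2) (Ici (m * (2 * π / 3)))
        (m * (2 * π / 3)) := by
  have hd := h0.mono (Icc_subset_Ici_self : Icc 0 (π / 3) ⊆ Ici 0)
  have hπ := pi_pos
  constructor
  · refine ((hasDerivWithinAt_devProfile (a := m * (2 * π / 3) - π / 3) (σ := -1)
      (κ := m * (2 * π / 3)) (fun φ hφ => ?_) ⟨by linarith, le_rfl⟩ (by ring) hd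
      hg0).congr_deriv (by ring)).mono_of_mem_nhdsWithin (Icc_mem_nhdsLE (by linarith))
    rw [foldAngle_eq_int_mul_sub m ⟨by linarith [hφ.2], by linarith [hφ.1]⟩]
    ring
  · refine ((hasDerivWithinAt_devProfile (b := m * (2 * π / 3) + π / 3) (σ := 1)
      (κ := -(m * (2 * π / 3))) (fun φ hφ => ?_) ⟨le_rfl, by linarith⟩ (by ring) hd
      hg0).congr_deriv (by ring)).mono_of_mem_nhdsWithin (Icc_mem_nhdsGE (by linarith))
    rw [foldAngle_eq_sub_int_mul m ⟨by linarith [hφ.1], by linarith [hφ.2]⟩]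
    ring

lemma hasDerivWithinAt_devProfile_odd_kink {gdpi : ℝ}
    (hpi : HasDerivWithinAt g gdpi (Iic (π / 3)) (π / 3)) (hgpi : g (π / 3) ≠ 0) (m : ℤ) :
    HasDerivWithinAt (devProfile g) (-gdpi / g (π / 3) ^ 2) (Iic (m * (2 * π / 3) + π / 3))
        (m * (2 * π / 3) + π / 3) ∧
      HasDerivWithinAt (devProfile g) (gdpi / g (π / 3) ^ 2) (Ici (m * (2 * π / 3) + π / 3))
        (m * (2 * π / 3) + π / 3) := by
  have hd := hpi.mono (Icc_subset_Iic_self : Icc 0 (π / 3) ⊆ Iic (π / 3))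
  have hπ := pi_pos
  constructor
  · refine ((hasDerivWithinAt_devProfile (a := m * (2 * π / 3)) (σ := 1)
      (κ := -(m * (2 * π / 3))) (fun φ hφ => ?_) ⟨by linarith, le_rfl⟩ (by ring) hd
      hgpi).congr_deriv (by ring)).mono_of_mem_nhdsWithin (Icc_mem_nhdsLE (by linarith))
    rw [foldAngle_eq_sub_int_mul m ⟨by linarith [hφ.1], by linarith [hφ.2]⟩]
    ring
  · refine ((hasDerivWithinAt_devProfile (b := (m + 1) * (2 * π / 3)) (σ := -1)
      (κ := (m + 1) * (2 * π / 3)) (fun φ hφ => ?_) ⟨le_rfl, by linarith⟩ (by ring) hd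
      hgpi).congr_deriv (by ring)).mono_of_mem_nhdsWithin (Icc_mem_nhdsGE (by linarith))
    have := foldAngle_eq_int_mul_sub (m + 1) (ψ := φ)
      (by push_cast; constructor <;> linarith [hφ.1, hφ.2])
    push_cast at this
    rw [this]
    ring

lemma devProfile_kink {gd0 gdpi : ℝ} (hgpos : ∀ t ∈ Icc 0 (π / 3), 0 < g t)
    (h0 : HasDerivWithinAt g gd0 (Ici 0) 0) (hpi : HasDerivWithinAt g gdpi (Iic (π / 3)) (π / 3))
    (hgd0 : gd0 ≤ 0) (hgdpi : 0 ≤ gdpi) (n : ℤ) :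
    ∃ kl kr, HasDerivWithinAt (devProfile g) kl (Iic (n * (π / 3))) (n * (π / 3)) ∧
      HasDerivWithinAt (devProfile g) kr (Ici (n * (π / 3))) (n * (π / 3)) ∧ kl ≤ kr := by
  obtain ⟨m, rfl | rfl⟩ := Int.even_or_odd' n
  · obtain ⟨hl, hr⟩ :=
      hasDerivWithinAt_devProfile_even_kink h0 (hgpos 0 ⟨le_rfl, by positivity⟩).ne' m
    rw [show ((2 * m : ℤ) : ℝ) * (π / 3) = m * (2 * π / 3) by push_cast; ring]
    exact ⟨_, _, hl, hr, div_le_div_of_nonneg_right (by linarith) (sq_nonneg _)⟩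
  · obtain ⟨hl, hr⟩ :=
      hasDerivWithinAt_devProfile_odd_kink hpi (hgpos _ ⟨by positivity, le_rfl⟩).ne' m
    rw [show ((2 * m + 1 : ℤ) : ℝ) * (π / 3) = m * (2 * π / 3) + π / 3 by push_cast; ring]
    exact ⟨_, _, hl, hr, div_le_div_of_nonneg_right (by linarith) (sq_nonneg _)⟩

end Profile

/-- Theorem 2: For g continuous, strictly positive on [0,π/3], twice
differentiable on (0,π/3), with one-sided derivatives g′₊(0), g′₋(π/3) at the endpoints,
G = q/g(θ) is convex on ℝ² iff g² + 2g′² − gg″ ≥ 0 on (0,π/3), g′₊(0) ≤ 0 and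
g′₋(π/3) ≥ 0. -/
theorem convexity_nonsmooth_deviatoric
    (g : ℝ → ℝ)
    (hgc : ContinuousOn g (Set.Icc 0 (Real.pi / 3)))
    (hgpos : ∀ t ∈ Set.Icc 0 (Real.pi / 3), 0 < g t)
    (hgd : ∀ t ∈ Set.Ioo 0 (Real.pi / 3),
      DifferentiableAt ℝ g t ∧ DifferentiableAt ℝ (deriv g) t)
    (gd0 gdpi : ℝ)
    (h0 : HasDerivWithinAt g gd0 (Set.Ici 0) 0)
    (hpi : HasDerivWithinAt g gdpi (Set.Iic (Real.pi / 3)) (Real.pi / 3)) :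
    ConvexOn ℝ Set.univ (Gf g) ↔
      ((∀ t ∈ Set.Ioo 0 (Real.pi / 3),
          0 ≤ (g t) ^ 2 + 2 * (deriv g t) ^ 2 - g t * deriv (deriv g) t) ∧
        gd0 ≤ 0 ∧ 0 ≤ gdpi) := by
  have hg0 : 0 < g 0 := hgpos 0 ⟨le_rfl, by positivity⟩
  have hgπ : 0 < g (π / 3) := hgpos _ ⟨by positivity, le_rfl⟩
  have hpiece₀ {φ : ℝ} (hφ : φ ∈ Ioo 0 (π / 3)) := devProfile_curvature hgpos hgd (n := 0)
    (by simpa using hφ)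
  rw [convexOn_Gf_iff hgpos]
  constructor
  · intro h
    refine ⟨fun θ hθ => ?_, ?_, ?_⟩
    · have := (h θ).homExtLine_curvature_nonneg
        (eventually_of_mem (Ioo_mem_nhds hθ.1 hθ.2) fun φ hφ => (hpiece₀ hφ).1)
        (hpiece₀ hθ).2.1
      rwa [(hpiece₀ hθ).2.2, foldAngle_of_mem_Icc (Ioo_subset_Icc_self hθ),
        le_div_iff₀ (pow_pos (hgpos θ (Ioo_subset_Icc_self hθ)) 3), zero_mul] at this
    · obtain ⟨hl, hr⟩ := hasDerivWithinAt_devProfile_even_kink h0 hg0.ne' 0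
      simp only [Int.cast_zero, zero_mul] at hl hr
      have := (h 0).homExtLine_kink_le hl hr
      rw [div_le_div_iff_of_pos_right (by positivity)] at this
      linarith
    · obtain ⟨hl, hr⟩ := hasDerivWithinAt_devProfile_odd_kink hpi hgπ.ne' 0
      simp only [Int.cast_zero, zero_mul, zero_add] at hl hr
      have := (h (π / 3)).homExtLine_kink_le hl hr
      rw [div_le_div_iff_of_pos_right (by positivity)] at this
      linarith
  · rintro ⟨hcurv, hgd0, hgdpi⟩
    refine fun α => convexOn_homExtLine_of_kinks (by positivity) (continuous_devProfile hgc hgpos)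
      (fun n φ hφ => ?_) (devProfile_kink hgpos h0 hpi hgd0 hgdpi)
    obtain ⟨hd, hd', heq⟩ := devProfile_curvature hgpos hgd hφ
    have hθ := foldAngle_mem_Ioo hφ
    exact ⟨hd, hd', heq ▸ div_nonneg (hcurv _ hθ)
      (pow_pos (hgpos _ (Ioo_subset_Icc_self hθ)) 3).le⟩
end

section
/- Define g : [0, π/3] → ℝ by g(θ) = 1/(2 − cos²θ). Then g is smooth and strictly positive, g′(0) = 0, g′(π/3) < 0, and g(θ)² + 2g′(θ)² − g(θ)g″(θ) ≥ 0 for all θ ∈ (0, π/3). Consequently (since g′(π/3) < 0) the associated function G = q/g(θ) of (S₁,S₂) is NOT convex: the corresponding deviatoric yield section has reentrant (concave) corners at θ = π/3 even though the interior curvature condition and the condition g′(0) = 0 hold. -/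
open Real

private lemma Dpos (t : ℝ) : 0 < 2 - Real.cos t ^ 2 := by
  nlinarith [Real.cos_sq_le_one t]

private lemma hasD (t : ℝ) :
    HasDerivAt (fun s : ℝ => 1 / (2 - Real.cos s ^ 2))
      (-(2 * Real.cos t * Real.sin t) / (2 - Real.cos t ^ 2) ^ 2) t := by
  have h1 : HasDerivAt (fun s : ℝ => 2 - Real.cos s ^ 2)
      (2 * Real.cos t * Real.sin t) t := by
    have h := (hasDerivAt_const t (2:ℝ)).sub ((Real.hasDerivAt_cos t).pow 2)
    convert h using 1 <;> first | rfl | (funext s; simp) | (push_cast; ring)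
  have h2 := h1.inv (ne_of_gt (Dpos t))
  simpa [one_div, Pi.inv_def] using h2

private lemma derivf (t : ℝ) :
    deriv (fun s : ℝ => 1 / (2 - Real.cos s ^ 2)) t
      = -(2 * Real.cos t * Real.sin t) / (2 - Real.cos t ^ 2) ^ 2 :=
  (hasD t).deriv

private lemma hasD2 (t : ℝ) :
    HasDerivAt (deriv (fun s : ℝ => 1 / (2 - Real.cos s ^ 2)))
      ((-(2 * (Real.cos t ^ 2 - Real.sin t ^ 2)) * (2 - Real.cos t ^ 2) ^ 2
        - -(2 * Real.cos t * Real.sin t)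
            * (2 * (2 - Real.cos t ^ 2) * (2 * Real.cos t * Real.sin t)))
        / ((2 - Real.cos t ^ 2) ^ 2) ^ 2) t := by
  have hEq : deriv (fun s : ℝ => 1 / (2 - Real.cos s ^ 2))
      = fun s : ℝ => -(2 * Real.cos s * Real.sin s) / (2 - Real.cos s ^ 2) ^ 2 :=
    funext derivf
  rw [hEq]
  have hu : HasDerivAt (fun s : ℝ => -(2 * Real.cos s * Real.sin s))
      (-(2 * (Real.cos t ^ 2 - Real.sin t ^ 2))) t := by
    have h := (((Real.hasDerivAt_cos t).const_mul (2:ℝ)).mul (Real.hasDerivAt_sin t)).neg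
    convert h using 1 <;> first | rfl | (funext s; simp) | ring
  have h1 : HasDerivAt (fun s : ℝ => 2 - Real.cos s ^ 2)
      (2 * Real.cos t * Real.sin t) t := by
    have h := (hasDerivAt_const t (2:ℝ)).sub ((Real.hasDerivAt_cos t).pow 2)
    convert h using 1 <;> first | rfl | (funext s; simp) | (push_cast; ring)
  have hv : HasDerivAt (fun s : ℝ => (2 - Real.cos s ^ 2) ^ 2)
      (2 * (2 - Real.cos t ^ 2) * (2 * Real.cos t * Real.sin t)) t := by
    have h := h1.pow 2
    convert h using 1 <;> first | rfl | (funext s; simp) | (push_cast; ring)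
  exact hu.div hv (by have := Dpos t; positivity)

private lemma curvature (t : ℝ) :
    0 ≤ (1 / (2 - Real.cos t ^ 2)) ^ 2
        + 2 * (deriv (fun s : ℝ => 1 / (2 - Real.cos s ^ 2)) t) ^ 2
        - (1 / (2 - Real.cos t ^ 2))
            * deriv (deriv (fun s : ℝ => 1 / (2 - Real.cos s ^ 2))) t := by
  rw [derivf, (hasD2 t).deriv]
  have hD := Dpos t
  have h5 : (0 : ℝ) < (2 - Real.cos t ^ 2) ^ 5 := by positivity
  have key : ((1 / (2 - Real.cos t ^ 2)) ^ 2
        + 2 * (-(2 * Real.cos t * Real.sin t) / (2 - Real.cos t ^ 2) ^ 2) ^ 2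
        - (1 / (2 - Real.cos t ^ 2))
            * ((-(2 * (Real.cos t ^ 2 - Real.sin t ^ 2)) * (2 - Real.cos t ^ 2) ^ 2
        - -(2 * Real.cos t * Real.sin t)
            * (2 * (2 - Real.cos t ^ 2) * (2 * Real.cos t * Real.sin t)))
        / ((2 - Real.cos t ^ 2) ^ 2) ^ 2)) * (2 - Real.cos t ^ 2) ^ 5
      = 3 * Real.cos t ^ 2 * (2 - Real.cos t ^ 2) ^ 2 := by
    field_simp
    linear_combination (2 * Real.cos t ^ 2 - 4) * Real.sin_sq_add_cos_sq t
  have hnn : (0 : ℝ) ≤ 3 * Real.cos t ^ 2 * (2 - Real.cos t ^ 2) ^ 2 := by positivity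
  rw [← key] at hnn
  exact (mul_nonneg_iff_of_pos_right h5).mp hnn



private lemma G10 : Gf (fun t : ℝ => 1 / (2 - Real.cos t ^ 2)) ((1:ℝ), (0:ℝ))
    = Real.sqrt 3 * (5 / 4) := by
  have hq : qf ((1:ℝ), (0:ℝ)) = Real.sqrt 3 := by norm_num [qf]
  have hθ : θf ((1:ℝ), (0:ℝ)) = Real.pi / 6 := by
    simp only [θf]
    norm_num [Real.arccos_zero]
    ring
  have hc : Real.cos (Real.pi / 6) ^ 2 = 3 / 4 := by
    rw [Real.cos_pi_div_six]
    rw [div_pow, Real.sq_sqrt (by norm_num : (3:ℝ) ≥ 0)]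
    norm_num
  simp only [Gf, hq, hθ, hc]
  norm_num
  ring

private lemma G01 : Gf (fun t : ℝ => 1 / (2 - Real.cos t ^ 2)) ((0:ℝ), (1:ℝ))
    = Real.sqrt 3 * (5 / 4) := by
  have hq : qf ((0:ℝ), (1:ℝ)) = Real.sqrt 3 := by norm_num [qf]
  have hθ : θf ((0:ℝ), (1:ℝ)) = Real.pi / 6 := by
    simp only [θf]
    norm_num [Real.arccos_zero]
    ring
  have hc : Real.cos (Real.pi / 6) ^ 2 = 3 / 4 := by
    rw [Real.cos_pi_div_six]
    rw [div_pow, Real.sq_sqrt (by norm_num : (3:ℝ) ≥ 0)]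
    norm_num
  simp only [Gf, hq, hθ, hc]
  norm_num
  ring

private lemma Ghalf : Gf (fun t : ℝ => 1 / (2 - Real.cos t ^ 2)) ((1/2 : ℝ), (1/2 : ℝ))
    = 21 / 8 := by
  have hq : qf ((1/2:ℝ), (1/2:ℝ)) = 3 / 2 := by
    have : (3 : ℝ) * ((1/2:ℝ) ^ 2 + (1/2:ℝ) * (1/2:ℝ) + (1/2:ℝ) ^ 2) = (3/2) ^ 2 := by norm_num
    simp only [qf]
    rw [this, Real.sqrt_sq (by norm_num : (0:ℝ) ≤ 3/2)]
  have hθ : θf ((1/2:ℝ), (1/2:ℝ)) = Real.pi / 3 := by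
    simp only [θf, hq]
    norm_num [Real.arccos_neg_one]
    ring
  have hc : Real.cos (Real.pi / 3) = 1 / 2 := Real.cos_pi_div_three
  simp only [Gf, hq, hθ, hc]
  norm_num

/-- Laydi–Lexcellent example: g(θ) = 1/(2 − cos²θ) is smooth and strictly
positive on [0,π/3], g′(0) = 0, g′(π/3) < 0, the curvature condition
g² + 2g′² − gg″ ≥ 0 holds on (0,π/3), and yet G = q/g(θ) is NOT convex (the deviatoric
section has reentrant corners at θ = π/3). -/
theorem laydi_lexcellent_example :
    (ContDiffOn ℝ (⊤ : ℕ∞) (fun t : ℝ => 1 / (2 - Real.cos t ^ 2)) (Set.Icc 0 (Real.pi / 3))) ∧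
    (∀ t ∈ Set.Icc 0 (Real.pi / 3), 0 < 1 / (2 - Real.cos t ^ 2)) ∧
    deriv (fun t : ℝ => 1 / (2 - Real.cos t ^ 2)) 0 = 0 ∧
    deriv (fun t : ℝ => 1 / (2 - Real.cos t ^ 2)) (Real.pi / 3) < 0 ∧
    (∀ t ∈ Set.Ioo 0 (Real.pi / 3),
      0 ≤ (1 / (2 - Real.cos t ^ 2)) ^ 2
          + 2 * (deriv (fun s : ℝ => 1 / (2 - Real.cos s ^ 2)) t) ^ 2
          - (1 / (2 - Real.cos t ^ 2))
              * deriv (deriv (fun s : ℝ => 1 / (2 - Real.cos s ^ 2))) t) ∧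
    ¬ ConvexOn ℝ Set.univ (Gf (fun t : ℝ => 1 / (2 - Real.cos t ^ 2))) := by
  refine ⟨?_, ?_, ?_, ?_, ?_, ?_⟩
  · have hsm : ContDiff ℝ (⊤ : ℕ∞) (fun t : ℝ => (2 - Real.cos t ^ 2)⁻¹) := by
      exact ContDiff.inv (contDiff_const.sub (Real.contDiff_cos.pow 2))
        (fun t => ne_of_gt (Dpos t))
    have : ContDiff ℝ (⊤ : ℕ∞) (fun t : ℝ => 1 / (2 - Real.cos t ^ 2)) := by
      simpa [one_div] using hsm
    exact this.contDiffOn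
  · intro t _
    exact one_div_pos.mpr (Dpos t)
  · rw [derivf]; simp
  · rw [derivf, Real.cos_pi_div_three, Real.sin_pi_div_three]
    have h3 : (0:ℝ) < Real.sqrt 3 := Real.sqrt_pos.mpr (by norm_num)
    have : (0:ℝ) < (2 - (1/2 : ℝ) ^ 2) ^ 2 := by norm_num
    rw [div_neg_iff]
    right
    constructor
    · nlinarith
    · norm_num
  · intro t _
    exact curvature t
  · intro h
    have h2 := h.2 (Set.mem_univ ((1:ℝ), (0:ℝ))) (Set.mem_univ ((0:ℝ), (1:ℝ)))
      (by norm_num : (0:ℝ) ≤ 1/2) (by norm_num : (0:ℝ) ≤ 1/2) (by norm_num)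
    have hmid : (1/2 : ℝ) • ((1:ℝ), (0:ℝ)) + (1/2 : ℝ) • ((0:ℝ), (1:ℝ))
        = ((1/2 : ℝ), (1/2 : ℝ)) := by
      simp [Prod.ext_iff]
    rw [hmid, Ghalf, G10, G01] at h2
    simp only [smul_eq_mul] at h2
    have hs3 : Real.sqrt 3 ^ 2 = 3 := Real.sq_sqrt (by norm_num)
    nlinarith [Real.sqrt_nonneg 3]
end

section
/- Define g : [0, π/3] → ℝ by 1/g(θ) = cos(0.5·π/6 − (1/3)·arccos(0.99·cos 3θ)). Then g is smooth and strictly positive on [0, π/3], satisfies g′(0) = 0, g′(π/3) = 0, and g(θ)² + 2g′(θ)² − g(θ)g″(θ) ≥ 0 for all θ ∈ (0, π/3) (so the corresponding deviatoric section is smooth and convex), and yet there exists θ ∈ (0, π/3) such that cos θ·g(θ)g′(θ) + sin θ·(2g′(θ)² − g(θ)g″(θ)) < 0. Hence the Laydi–Lexcellent conditions are not necessary for convexity of a smooth deviatoric yield section. -/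
/-- The Bigoni–Piccolroaz deviatoric shape function with β = 0.5, γ = 0.99:
1/g(θ) = cos(0.5·π/6 − (1/3)·arccos(0.99·cos 3θ)). -/
noncomputable def gBP (t : ℝ) : ℝ :=
  1 / Real.cos (0.5 * (Real.pi / 6) - Real.arccos (0.99 * Real.cos (3 * t)) / 3)

noncomputable section
namespace LLX

def Bf (t : ℝ) : ℝ := 0.5 * (Real.pi / 6) - Real.arccos (0.99 * Real.cos (3 * t)) / 3
def hf (t : ℝ) : ℝ := Real.cos (Bf t)
def sf (t : ℝ) : ℝ := Real.sqrt (1 - (0.99 * Real.cos (3 * t)) ^ 2)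
def h1 (t : ℝ) : ℝ := 0.99 * Real.sin (3*t) * Real.sin (Bf t) / sf t
def h2 (t : ℝ) : ℝ := 0.99 * (3 * Real.cos (3*t) * Real.sin (Bf t) / sf t
        - 0.99 * Real.sin (3*t)^2 * Real.cos (Bf t) / sf t ^ 2
        - 3 * 0.99^2 * Real.cos (3*t) * Real.sin (3*t)^2 * Real.sin (Bf t) / sf t ^ 3)
def g1 (t : ℝ) : ℝ := -h1 t / hf t ^ 2
def g2 (t : ℝ) : ℝ := -h2 t / hf t ^ 2 + 2 * h1 t ^ 2 / hf t ^ 3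

lemma v_le (t : ℝ) : |0.99 * Real.cos (3*t)| ≤ 0.99 := by
  rw [abs_mul]
  calc |(0.99:ℝ)| * |Real.cos (3*t)| ≤ |(0.99:ℝ)| * 1 :=
        mul_le_mul_of_nonneg_left (Real.abs_cos_le_one _) (abs_nonneg _)
    _ = 0.99 := by norm_num

lemma sf_sq (t : ℝ) : sf t ^ 2 = 1 - (0.99 * Real.cos (3*t))^2 := by
  rw [sf, Real.sq_sqrt]
  have := v_le t
  nlinarith [abs_nonneg (0.99 * Real.cos (3*t)), sq_abs (0.99 * Real.cos (3*t))]

lemma sf_pos (t : ℝ) : 0 < sf t := by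
  apply Real.sqrt_pos.2
  have := v_le t
  nlinarith [sq_abs (0.99 * Real.cos (3*t)), abs_nonneg (0.99 * Real.cos (3*t))]

lemma B_mem (t : ℝ) : Bf t ∈ Set.Ioo (-(Real.pi/2)) (Real.pi/2) := by
  have h1 := Real.arccos_nonneg (0.99 * Real.cos (3*t))
  have h2 := Real.arccos_le_pi (0.99 * Real.cos (3*t))
  have hpi := Real.pi_pos
  constructor <;> (rw [Bf]; nlinarith)

lemma hf_pos (t : ℝ) : 0 < hf t := Real.cos_pos_of_mem_Ioo (B_mem t)

lemma hasDerivAt_B (t : ℝ) :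
    HasDerivAt Bf (-(0.99 * Real.sin (3*t) / sf t)) t := by
  have hne1 : 0.99 * Real.cos (3*t) ≠ -1 := by
    have := v_le t; intro h; rw [h] at this; norm_num at this
  have hne2 : 0.99 * Real.cos (3*t) ≠ 1 := by
    have := v_le t; intro h; rw [h] at this; norm_num at this
  have hv : HasDerivAt (fun t : ℝ => 0.99 * Real.cos (3*t)) (0.99 * (-Real.sin (3*t) * 3)) t := by
    have : HasDerivAt (fun t : ℝ => Real.cos (3*t)) (-Real.sin (3*t) * 3) t := by
      exact (Real.hasDerivAt_cos (3*t)).comp t (by simpa using (hasDerivAt_id t).const_mul 3)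
    simpa using this.const_mul 0.99
  have ha : HasDerivAt (fun t : ℝ => Real.arccos (0.99 * Real.cos (3*t)))
      (-(1 / Real.sqrt (1 - (0.99*Real.cos (3*t))^2)) * (0.99 * (-Real.sin (3*t) * 3))) t :=
    by have := (Real.hasDerivAt_arccos hne1 hne2).comp t hv; exact this
  have : HasDerivAt Bf (-((-(1 / Real.sqrt (1 - (0.99*Real.cos (3*t))^2)) * (0.99 * (-Real.sin (3*t) * 3))) / 3)) t := by
    unfold Bf; simpa using (ha.div_const 3).const_sub (0.5 * (Real.pi/6))
  convert this using 1
  have hs := sf_pos t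
  rw [show Real.sqrt (1 - (0.99*Real.cos (3*t))^2) = sf t from rfl]
  field_simp

lemma hasDerivAt_h (t : ℝ) : HasDerivAt hf (h1 t) t := by
  have := (Real.hasDerivAt_cos (Bf t)).comp t (hasDerivAt_B t)
  convert this using 1 <;> try rfl
  rw [h1]; field_simp

lemma hasDerivAt_cos3 (t : ℝ) : HasDerivAt (fun t : ℝ => Real.cos (3*t)) (-Real.sin (3*t) * 3) t := by
  exact (Real.hasDerivAt_cos (3*t)).comp t (by simpa using (hasDerivAt_id t).const_mul 3)

lemma hasDerivAt_sin3 (t : ℝ) : HasDerivAt (fun t : ℝ => Real.sin (3*t)) (Real.cos (3*t) * 3) t := by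
  exact (Real.hasDerivAt_sin (3*t)).comp t (by simpa using (hasDerivAt_id t).const_mul 3)

lemma hasDerivAt_sf (t : ℝ) :
    HasDerivAt sf (3 * 0.99^2 * Real.cos (3*t) * Real.sin (3*t) / sf t) t := by
  have hinner : HasDerivAt (fun t : ℝ => 1 - (0.99 * Real.cos (3*t))^2)
      (-(2 * (0.99 * Real.cos (3*t)) ^ 1 * (0.99 * (-Real.sin (3*t) * 3)))) t := by
    have hv : HasDerivAt (fun t : ℝ => 0.99 * Real.cos (3*t)) (0.99 * (-Real.sin (3*t) * 3)) t := by
      simpa using (hasDerivAt_cos3 t).const_mul 0.99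
    simpa using (hv.pow 2).const_sub 1
  have hne : 1 - (0.99 * Real.cos (3*t))^2 ≠ 0 := by
    have := sf_pos t; have := sf_sq t; nlinarith
  have := hinner.sqrt hne
  convert this using 1 <;> try rfl
  rw [show Real.sqrt (1 - (0.99*Real.cos (3*t))^2) = sf t from rfl]
  have hs := sf_pos t
  field_simp

lemma hasDerivAt_h1 (t : ℝ) : HasDerivAt h1 (h2 t) t := by
  have hs := sf_pos t
  have hnum : HasDerivAt (fun t => 0.99 * Real.sin (3*t) * Real.sin (Bf t))
      (0.99 * (Real.cos (3*t) * 3) * Real.sin (Bf t)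
        + 0.99 * Real.sin (3*t) * (Real.cos (Bf t) * -(0.99 * Real.sin (3*t) / sf t))) t := by
    have hb : HasDerivAt (fun t => Real.sin (Bf t)) (Real.cos (Bf t) * -(0.99 * Real.sin (3*t) / sf t)) t :=
      (Real.hasDerivAt_sin (Bf t)).comp t (hasDerivAt_B t)
    exact (((hasDerivAt_sin3 t).const_mul 0.99).mul hb)
  have := hnum.div (hasDerivAt_sf t) (ne_of_gt hs)
  convert this using 1 <;> try rfl
  rw [h2]
  have h2s := sf_sq t
  field_simp
  ring

lemma gBP_eq : gBP = fun t => 1 / hf t := rfl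

lemma hasDerivAt_g (t : ℝ) : HasDerivAt gBP (g1 t) t := by
  rw [gBP_eq]
  have := ((hasDerivAt_const t (1:ℝ)).div (hasDerivAt_h t) (ne_of_gt (hf_pos t)))
  convert this using 1 <;> try rfl
  rw [g1]; field_simp; ring

lemma deriv_g : deriv gBP = g1 := funext fun t => (hasDerivAt_g t).deriv

lemma hasDerivAt_g1 (t : ℝ) : HasDerivAt g1 (g2 t) t := by
  have h := hasDerivAt_h t
  have hne := ne_of_gt (hf_pos t)
  have : HasDerivAt (fun t => -h1 t / hf t ^ 2)
      ((-h2 t * hf t ^ 2 - (-h1 t) * (2 * hf t ^ 1 * h1 t)) / (hf t ^ 2) ^ 2) t :=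
    ((hasDerivAt_h1 t).neg).div (h.pow 2) (pow_ne_zero 2 hne)
  have hfun : g1 = fun t => -h1 t / hf t ^ 2 := rfl
  rw [hfun]
  convert this using 1
  rw [g2]; field_simp; ring

lemma deriv_g1 : deriv (deriv gBP) = g2 := by
  rw [deriv_g]; exact funext fun t => (hasDerivAt_g1 t).deriv

lemma E_eq (t : ℝ) :
    gBP t ^ 2 + 2 * (deriv gBP t) ^ 2 - gBP t * deriv (deriv gBP) t
      = (hf t + h2 t) / hf t ^ 3 := by
  rw [deriv_g1, deriv_g, gBP_eq, g1, g2]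
  have hne := ne_of_gt (hf_pos t)
  field_simp
  ring

lemma LL_eq (t : ℝ) :
    Real.cos t * (gBP t * deriv gBP t)
        + Real.sin t * (2 * (deriv gBP t) ^ 2 - gBP t * deriv (deriv gBP) t)
      = (-(Real.cos t * h1 t) + Real.sin t * h2 t) / hf t ^ 3 := by
  rw [deriv_g1, deriv_g, gBP_eq, g1, g2]
  have hne := ne_of_gt (hf_pos t)
  field_simp
  ring

lemma trig_id (x c : ℝ) :
    Real.sin (3*x) * Real.cos (c - x) + 3 * Real.cos (3*x) * Real.sin (c - x)
      = 2 * Real.sin (2*x + c) - Real.sin (4*x - c) := by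
  rw [show (4:ℝ)*x - c = 2*(2*x) - c by ring]
  simp only [Real.sin_three_mul, Real.cos_three_mul, Real.sin_add, Real.cos_sub, Real.sin_sub,
    Real.cos_add, Real.sin_two_mul, Real.cos_two_mul]
  linear_combination (-Real.sin c - 4*Real.sin x*Real.cos x*Real.cos c
    - 4*Real.sin x^2*Real.sin c + 4*Real.cos x^2*Real.sin c) * (Real.sin_sq_add_cos_sq x)

lemma sin_mono {a b : ℝ} (ha : -(Real.pi/2) ≤ a) (hab : a ≤ b) (hb : b ≤ Real.pi/2) :
    Real.sin a ≤ Real.sin b := by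
  rcases eq_or_lt_of_le hab with h | h
  · rw [h]
  · exact le_of_lt (Real.sin_lt_sin_of_lt_of_le_pi_div_two (by linarith) hb h)

lemma core (ρ : ℝ) (h0 : 0 ≤ ρ) (h1 : ρ ≤ Real.pi) :
    0 ≤ Real.sin ρ * Real.cos (0.5*(Real.pi/6) - ρ/3)
        + 3 * Real.cos ρ * Real.sin (0.5*(Real.pi/6) - ρ/3) := by
  have hpi := Real.pi_pos
  have hx : ρ = 3 * (ρ/3) := by ring
  have hc : (0.5*(Real.pi/6) : ℝ) = Real.pi/12 := by ring
  rw [hc, hx, show (3:ℝ)*(ρ/3)/3 = ρ/3 by ring, trig_id (ρ/3) (Real.pi/12)]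
  set x := ρ/3 with hxdef
  have hx0 : 0 ≤ x := by positivity
  have hx1 : x ≤ Real.pi/3 := by rw [hxdef]; linarith
  rcases le_or_gt (2*x + Real.pi/12) (Real.pi/4) with hcase | hcase
  · have hw_le : 4*x - Real.pi/12 ≤ 2*x + Real.pi/12 := by linarith
    have h1' : Real.sin (4*x - Real.pi/12) ≤ Real.sin (2*x + Real.pi/12) :=
      sin_mono (by linarith) hw_le (by linarith)
    have h2' : 0 ≤ Real.sin (2*x + Real.pi/12) :=
      Real.sin_nonneg_of_nonneg_of_le_pi (by linarith) (by linarith)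
    linarith
  · have husin : Real.sin (Real.pi/4) ≤ Real.sin (2*x + Real.pi/12) := by
      rcases le_or_gt (2*x + Real.pi/12) (Real.pi/2) with h | h
      · exact sin_mono (by linarith) hcase.le h
      · have h' : Real.sin (Real.pi/4) ≤ Real.sin (Real.pi - (2*x + Real.pi/12)) :=
          sin_mono (by linarith) (by linarith) (by linarith)
        rwa [Real.sin_pi_sub] at h'
    rw [Real.sin_pi_div_four] at husin
    have hs2 : (1:ℝ) ≤ Real.sqrt 2 := by
      nlinarith [Real.sq_sqrt (by norm_num : (2:ℝ) ≥ 0), Real.sqrt_nonneg 2]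
    have := Real.sin_le_one (4*x - Real.pi/12)
    linarith

lemma alg (σ S3 C3 sB cB : ℝ) (hσ : σ ≠ 0) (h1 : σ^2 = 1 - (0.99*C3)^2) (h2 : S3^2 = 1 - C3^2) :
    cB + 0.99*(3*C3*sB/σ - 0.99*S3^2*cB/σ^2 - 3*0.99^2*C3*S3^2*sB/σ^3)
     = (1-0.99^2) * (σ*cB + 3*(0.99*C3)*sB)/σ^3 := by
  rw [h2]
  field_simp
  ring_nf
  linear_combination (cB*σ + 3*0.99*C3*sB) * h1

lemma h_plus_h2_nonneg (t : ℝ) : 0 ≤ hf t + h2 t := by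
  have hb := abs_le.1 (v_le t)
  have hΨ : 0 ≤ sf t * Real.cos (Bf t) + 3 * (0.99 * Real.cos (3*t)) * Real.sin (Bf t) := by
    have h := core (Real.arccos (0.99 * Real.cos (3*t)))
      (Real.arccos_nonneg _) (Real.arccos_le_pi _)
    rwa [Real.sin_arccos, Real.cos_arccos (by linarith) (by linarith)] at h
  have hs := sf_pos t
  have hS : Real.sin (3*t)^2 = 1 - Real.cos (3*t)^2 := by
    nlinarith [Real.sin_sq_add_cos_sq (3*t)]
  have key : hf t + h2 t
      = (1 - 0.99^2) * (sf t * Real.cos (Bf t) + 3 * (0.99 * Real.cos (3*t)) * Real.sin (Bf t))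
        / sf t ^ 3 :=
    alg (sf t) (Real.sin (3*t)) (Real.cos (3*t)) (Real.sin (Bf t)) (Real.cos (Bf t))
      (ne_of_gt hs) (sf_sq t) hS
  rw [key]
  positivity

lemma key1d (H H1 H2 : ℝ → ℝ) (hd1 : ∀ x, HasDerivAt H (H1 x) x)
    (hd2 : ∀ x, HasDerivAt H1 (H2 x) x) (hpos : ∀ x, 0 ≤ H x + H2 x)
    (ψ ζ : ℝ) (hlo : ψ - Real.pi ≤ ζ) (hhi : ζ ≤ ψ + Real.pi) :
    H ψ * Real.cos (ζ - ψ) + H1 ψ * Real.sin (ζ - ψ) ≤ H ζ := by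
  set D : ℝ → ℝ := fun σ => H σ - H ψ * Real.cos (σ - ψ) - H1 ψ * Real.sin (σ - ψ) with hD
  set D1 : ℝ → ℝ := fun σ => H1 σ + H ψ * Real.sin (σ - ψ) - H1 ψ * Real.cos (σ - ψ) with hD1
  set W : ℝ → ℝ := fun σ => D1 σ * Real.sin (ζ - σ) + D σ * Real.cos (ζ - σ) with hW
  have hsub : ∀ σ : ℝ, HasDerivAt (fun σ : ℝ => σ - ψ) 1 σ := fun σ => by
    simpa using (hasDerivAt_id σ).sub_const ψ
  have hzsub : ∀ σ : ℝ, HasDerivAt (fun σ : ℝ => ζ - σ) (-1) σ := fun σ => by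
    simpa using ((hasDerivAt_id σ).const_sub ζ)
  have hdD : ∀ σ, HasDerivAt D (D1 σ) σ := by
    intro σ
    have hc : HasDerivAt (fun σ => Real.cos (σ - ψ)) (-Real.sin (σ - ψ)) σ := by
      have h := (Real.hasDerivAt_cos (σ - ψ)).comp σ (hsub σ); rw [mul_one] at h; exact h
    have hs : HasDerivAt (fun σ => Real.sin (σ - ψ)) (Real.cos (σ - ψ)) σ := by
      have h := (Real.hasDerivAt_sin (σ - ψ)).comp σ (hsub σ); rw [mul_one] at h; exact h
    have := ((hd1 σ).sub ((hc.const_mul (H ψ)))).sub (hs.const_mul (H1 ψ))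
    convert this using 1 <;> try rfl
    simp only [hD1]
    try ring
  have hdD1 : ∀ σ, HasDerivAt D1 (H2 σ + H ψ * Real.cos (σ - ψ) + H1 ψ * Real.sin (σ - ψ)) σ := by
    intro σ
    have hc : HasDerivAt (fun σ => Real.cos (σ - ψ)) (-Real.sin (σ - ψ)) σ := by
      have h := (Real.hasDerivAt_cos (σ - ψ)).comp σ (hsub σ); rw [mul_one] at h; exact h
    have hs : HasDerivAt (fun σ => Real.sin (σ - ψ)) (Real.cos (σ - ψ)) σ := by
      have h := (Real.hasDerivAt_sin (σ - ψ)).comp σ (hsub σ); rw [mul_one] at h; exact h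
    have := ((hd2 σ).add (hs.const_mul (H ψ))).sub (hc.const_mul (H1 ψ))
    convert this using 1 <;> try rfl
    ring
  have hdW : ∀ σ, HasDerivAt W ((H σ + H2 σ) * Real.sin (ζ - σ)) σ := by
    intro σ
    have hzs : HasDerivAt (fun σ => Real.sin (ζ - σ)) (Real.cos (ζ - σ) * (-1)) σ :=
      (Real.hasDerivAt_sin (ζ - σ)).comp σ (hzsub σ)
    have hzc : HasDerivAt (fun σ => Real.cos (ζ - σ)) (-Real.sin (ζ - σ) * (-1)) σ :=
      (Real.hasDerivAt_cos (ζ - σ)).comp σ (hzsub σ)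
    have := ((hdD1 σ).mul hzs).add ((hdD σ).mul hzc)
    convert this using 1 <;> try rfl
    simp only [hD, hD1]; ring
  have hWψ : W ψ = 0 := by simp [hW, hD, hD1]
  have hWζ : W ζ = D ζ := by simp [hW]
  have hgoal : 0 ≤ D ζ := by
    rcases le_total ψ ζ with hc | hc
    · have hmono : MonotoneOn W (Set.Icc ψ ζ) := by
        apply monotoneOn_of_deriv_nonneg (convex_Icc ψ ζ)
        · exact fun x _ => ((hdW x).continuousAt).continuousWithinAt
        · exact fun x _ => ((hdW x).differentiableAt).differentiableWithinAt
        · intro x hx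
          rw [interior_Icc] at hx
          obtain ⟨hx1, hx2⟩ := hx
          rw [(hdW x).deriv]
          have : 0 ≤ Real.sin (ζ - x) :=
            Real.sin_nonneg_of_nonneg_of_le_pi (by linarith) (by linarith)
          exact mul_nonneg (hpos x) this
      have := hmono (Set.left_mem_Icc.2 hc) (Set.right_mem_Icc.2 hc) hc
      rw [hWψ, hWζ] at this; exact this
    · have hmono : AntitoneOn W (Set.Icc ζ ψ) := by
        apply antitoneOn_of_deriv_nonpos (convex_Icc ζ ψ)
        · exact fun x _ => ((hdW x).continuousAt).continuousWithinAt
        · exact fun x _ => ((hdW x).differentiableAt).differentiableWithinAt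
        · intro x hx
          rw [interior_Icc] at hx
          obtain ⟨hx1, hx2⟩ := hx
          rw [(hdW x).deriv]
          have : Real.sin (ζ - x) ≤ 0 :=
            Real.sin_nonpos_of_nonpos_of_neg_pi_le (by linarith) (by linarith)
          exact mul_nonpos_of_nonneg_of_nonpos (hpos x) this
      have := hmono (Set.left_mem_Icc.2 hc) (Set.right_mem_Icc.2 hc) hc
      rw [hWψ, hWζ] at this; exact this
  have : D ζ = H ζ - (H ψ * Real.cos (ζ - ψ) + H1 ψ * Real.sin (ζ - ψ)) := by
    simp [hD]; ring
  linarith [hgoal, this ▸ hgoal]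

lemma key1d_per (H H1 H2 : ℝ → ℝ) (hd1 : ∀ x, HasDerivAt H (H1 x) x)
    (hd2 : ∀ x, HasDerivAt H1 (H2 x) x) (hpos : ∀ x, 0 ≤ H x + H2 x)
    (hper : Function.Periodic H (2 * Real.pi))
    (ψ ζ : ℝ) :
    H ψ * Real.cos (ζ - ψ) + H1 ψ * Real.sin (ζ - ψ) ≤ H ζ := by
  have hpi := Real.pi_pos
  set n : ℤ := ⌊(ζ - ψ + Real.pi) / (2 * Real.pi)⌋ with hn
  set ζ' : ℝ := ζ - n * (2 * Real.pi) with hz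
  have h1 : (n : ℝ) ≤ (ζ - ψ + Real.pi) / (2 * Real.pi) := Int.floor_le _
  have h2 : (ζ - ψ + Real.pi) / (2 * Real.pi) < n + 1 := Int.lt_floor_add_one _
  have h2pi : (0:ℝ) < 2 * Real.pi := by linarith
  have ha : (n:ℝ) * (2*Real.pi) ≤ ζ - ψ + Real.pi := (le_div_iff₀ h2pi).1 h1
  have hb : ζ - ψ + Real.pi < ((n:ℝ)+1) * (2*Real.pi) := (div_lt_iff₀ h2pi).1 (by push_cast at h2 ⊢; linarith)
  have hlo : ψ - Real.pi ≤ ζ' := by rw [hz]; linarith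
  have hhi : ζ' ≤ ψ + Real.pi := by rw [hz]; nlinarith
  have hkey := key1d H H1 H2 hd1 hd2 hpos ψ ζ' hlo hhi
  have hHz : H ζ' = H ζ := hper.sub_int_mul_eq n
  have hcos : Real.cos (ζ' - ψ) = Real.cos (ζ - ψ) := by
    rw [hz, show ζ - (n:ℝ) * (2*Real.pi) - ψ = (ζ - ψ) + (-(n:ℝ)) * (2*Real.pi) by ring]
    have := Real.cos_add_int_mul_two_pi (ζ - ψ) (-n)
    push_cast at this
    exact this
  have hsin : Real.sin (ζ' - ψ) = Real.sin (ζ - ψ) := by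
    rw [hz, show ζ - (n:ℝ) * (2*Real.pi) - ψ = (ζ - ψ) + (-(n:ℝ)) * (2*Real.pi) by ring]
    have := Real.sin_add_int_mul_two_pi (ζ - ψ) (-n)
    push_cast at this
    exact this
  rw [hHz, hcos, hsin] at hkey
  exact hkey

lemma hf_periodic : Function.Periodic hf (2 * Real.pi) := by
  intro x
  have : Real.cos (3 * (x + 2 * Real.pi)) = Real.cos (3 * x) := by
    rw [show 3 * (x + 2*Real.pi) = 3*x + (3:ℤ) * (2*Real.pi) by push_cast; ring]
    exact Real.cos_add_int_mul_two_pi (3*x) 3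
  simp only [hf, Bf, this]

def Xc (S : ℝ × ℝ) : ℝ := Real.sqrt 3 * S.1 + Real.sqrt 3 / 2 * S.2
def Yc (S : ℝ × ℝ) : ℝ := 3 / 2 * S.2
def ℓf (ψ : ℝ) (S : ℝ × ℝ) : ℝ :=
  (hf ψ * Real.cos (ψ - Real.pi/6) - h1 ψ * Real.sin (ψ - Real.pi/6)) * Xc S
  + (hf ψ * Real.sin (ψ - Real.pi/6) + h1 ψ * Real.cos (ψ - Real.pi/6)) * Yc S

lemma sqrt3_sq : Real.sqrt 3 ^ 2 = 3 := Real.sq_sqrt (by norm_num)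

lemma q_eq (S : ℝ × ℝ) : qf S = Real.sqrt (Xc S ^ 2 + Yc S ^ 2) := by
  rw [qf]
  congr 1
  rw [Xc, Yc]
  linear_combination (-(S.1^2 + S.1*S.2 + S.2^2/4)) * sqrt3_sq

lemma m_eq (S : ℝ × ℝ) :
    (27/2) * (S.1 * S.2 * (-S.1 - S.2)) = Yc S ^ 3 - 3 * Xc S ^ 2 * Yc S := by
  rw [Xc, Yc]
  linear_combination ((9/2) * S.2 * (S.1^2 + S.1*S.2 + S.2^2/4)) * sqrt3_sq

lemma gBP_pos (t : ℝ) : 0 < gBP t := by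
  have := hf_pos t
  rw [show gBP t = 1 / hf t from rfl]
  positivity

lemma Gf_zero (S : ℝ × ℝ) (hq : qf S = 0) : Gf gBP S = 0 := by
  rw [Gf, hq, zero_div]

lemma XY_zero (S : ℝ × ℝ) (hq : qf S = 0) : Xc S = 0 ∧ Yc S = 0 := by
  have h := q_eq S
  rw [hq] at h
  have h3 : Xc S ^ 2 + Yc S ^ 2 ≤ 0 := Real.sqrt_eq_zero'.1 h.symm
  constructor <;> nlinarith [sq_nonneg (Xc S), sq_nonneg (Yc S)]

lemma polar (S : ℝ × ℝ) (hr : 0 < qf S) : ∃ ζ : ℝ,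
    Xc S = qf S * Real.cos (ζ - Real.pi/6) ∧ Yc S = qf S * Real.sin (ζ - Real.pi/6) ∧
    Gf gBP S = qf S * hf ζ := by
  set X := Xc S with hXdef
  set Y := Yc S with hYdef
  set r := qf S with hrdef
  set z : ℂ := (X : ℂ) + (Y : ℂ) * Complex.I with hzdef
  have habs : ‖z‖ = r := by
    rw [hzdef, Complex.norm_def, Complex.normSq_add_mul_I, hrdef, q_eq]
  have hzne : z ≠ 0 := by
    intro h0
    rw [h0] at habs
    simp at habs
    rw [← habs] at hr
    exact lt_irrefl _ hr
  set φ := Complex.arg z with hφdef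
  refine ⟨φ + Real.pi/6, ?_, ?_, ?_⟩
  · have := Complex.norm_mul_cos_arg z
    rw [habs] at this
    simp [hzdef] at this
    rw [show φ + Real.pi/6 - Real.pi/6 = φ by ring]
    rw [← this]
  · have := Complex.norm_mul_sin_arg z
    rw [habs] at this
    simp [hzdef] at this
    rw [show φ + Real.pi/6 - Real.pi/6 = φ by ring]
    rw [← this]
  · have hX : X = r * Real.cos φ := by
      have := Complex.norm_mul_cos_arg z
      rw [habs] at this; simp [hzdef] at this; rw [← this]
    have hY : Y = r * Real.sin φ := by
      have := Complex.norm_mul_sin_arg z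
      rw [habs] at this; simp [hzdef] at this; rw [← this]
    have hr2 : r ^ 2 = X ^ 2 + Y ^ 2 := by
      rw [hrdef, q_eq]
      exact Real.sq_sqrt (by positivity)
    have hGf : Gf gBP S = r * hf (θf S) := by
      rw [Gf, show gBP (θf S) = 1 / hf (θf S) from rfl, div_div_eq_mul_div, div_one, mul_comm]
    have hM : (27/2) * (S.1 * S.2 * (-S.1 - S.2)) = Y^3 - 3*X^2*Y := m_eq S
    have hu : ((Y^3 - 3*X^2*Y) / r^3) ^ 2 ≤ 1 := by
      have hident : (X^2+Y^2)^3 = (X^3 - 3*X*Y^2)^2 + (3*X^2*Y - Y^3)^2 := by ring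
      have hr6 : (r^2)^3 = (X^2+Y^2)^3 := by rw [hr2]
      rw [div_pow, div_le_one (by positivity)]
      nlinarith [sq_nonneg (X^3 - 3*X*Y^2), hr6]
    have hcos3θ : Real.cos (3 * θf S) = (Y^3 - 3*X^2*Y) / r^3 := by
      rw [θf, show (3 : ℝ) * ((1/3) * Real.arccos ((27 / 2) * (S.1 * S.2 * (-S.1 - S.2)) / (qf S) ^ 3)) = Real.arccos ((27 / 2) * (S.1 * S.2 * (-S.1 - S.2)) / (qf S) ^ 3) by ring]
      rw [hM, ← hrdef]
      apply Real.cos_arccos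
      · nlinarith [hu, sq_nonneg ((Y^3 - 3*X^2*Y) / r^3)]
      · nlinarith [hu, sq_nonneg ((Y^3 - 3*X^2*Y) / r^3 - 1), sq_nonneg ((Y^3 - 3*X^2*Y) / r^3 + 1)]
    have hcos3ζ : Real.cos (3 * (φ + Real.pi/6)) = (Y^3 - 3*X^2*Y) / r^3 := by
      rw [show 3 * (φ + Real.pi/6) = 3*φ + Real.pi/2 by ring, Real.cos_add_pi_div_two,
        Real.sin_three_mul]
      have hsin : Real.sin φ = Y / r := by
        rw [hY]; field_simp
      rw [hsin]
      have hrne : r ≠ 0 := ne_of_gt hr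
      field_simp
      ring_nf
      linear_combination (-3*Y) * hr2
    have : hf (θf S) = hf (φ + Real.pi/6) := by
      rw [hf, hf, Bf, Bf, hcos3θ, hcos3ζ]
    rw [hGf, this]

lemma ellf_le (ψ : ℝ) (S : ℝ × ℝ) : ℓf ψ S ≤ Gf gBP S := by
  rcases eq_or_lt_of_le (Real.sqrt_nonneg _ : (0:ℝ) ≤ qf S) with hq | hq
  · obtain ⟨hX0, hY0⟩ := XY_zero S hq.symm
    rw [ℓf, hX0, hY0, Gf_zero S hq.symm]
    simp
  · obtain ⟨ζ, hX, hY, hG⟩ := polar S hq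
    have aux : ∀ (A B R hp h1p : ℝ),
        (hp * Real.cos A - h1p * Real.sin A) * (R * Real.cos B)
          + (hp * Real.sin A + h1p * Real.cos A) * (R * Real.sin B)
        = R * (hp * Real.cos (B - A) + h1p * Real.sin (B - A)) := by
      intro A B R hp h1p
      rw [Real.cos_sub, Real.sin_sub]; ring
    have expand : ℓf ψ S = qf S * (hf ψ * Real.cos (ζ - ψ) + h1 ψ * Real.sin (ζ - ψ)) := by
      rw [ℓf, hX, hY, aux, show (ζ - Real.pi/6) - (ψ - Real.pi/6) = ζ - ψ by ring]
    rw [expand, hG]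
    apply mul_le_mul_of_nonneg_left _ hq.le
    exact key1d_per hf h1 h2 hasDerivAt_h hasDerivAt_h1 h_plus_h2_nonneg hf_periodic ψ ζ

lemma ellf_max (S : ℝ × ℝ) : ∃ ψ, ℓf ψ S = Gf gBP S := by
  rcases eq_or_lt_of_le (Real.sqrt_nonneg _ : (0:ℝ) ≤ qf S) with hq | hq
  · obtain ⟨hX0, hY0⟩ := XY_zero S hq.symm
    exact ⟨0, by rw [ℓf, hX0, hY0, Gf_zero S hq.symm]; simp⟩
  · obtain ⟨ζ, hX, hY, hG⟩ := polar S hq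
    refine ⟨ζ, ?_⟩
    rw [ℓf, hX, hY, hG]
    have hpyth : Real.cos (ζ - Real.pi/6) ^ 2 + Real.sin (ζ - Real.pi/6) ^ 2 = 1 := by
      rw [add_comm]; exact Real.sin_sq_add_cos_sq _
    linear_combination (qf S * hf ζ) * hpyth

lemma ellf_linear (ψ : ℝ) (a b : ℝ) (x y : ℝ × ℝ) :
    ℓf ψ (a • x + b • y) = a * ℓf ψ x + b * ℓf ψ y := by
  simp only [ℓf, Xc, Yc, Prod.smul_fst, Prod.smul_snd, Prod.fst_add, Prod.snd_add,
    smul_eq_mul]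
  ring

theorem convexGf : ConvexOn ℝ Set.univ (Gf gBP) := by
  refine ⟨convex_univ, fun x _ y _ a b ha hb hab => ?_⟩
  obtain ⟨ψ, hψ⟩ := ellf_max (a • x + b • y)
  rw [← hψ, ellf_linear]
  have h1 := ellf_le ψ x
  have h2 := ellf_le ψ y
  have := add_le_add (mul_le_mul_of_nonneg_left h1 ha) (mul_le_mul_of_nonneg_left h2 hb)
  simpa [smul_eq_mul] using this

lemma contDiff_gBP : ContDiff ℝ (⊤ : ℕ∞) gBP := by
  have hhf : ContDiff ℝ (⊤ : ℕ∞) hf := by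
    rw [contDiff_iff_contDiffAt]
    intro t
    have hne1 : 0.99 * Real.cos (3*t) ≠ -1 := by
      have := v_le t; intro h; rw [h] at this; norm_num at this
    have hne2 : 0.99 * Real.cos (3*t) ≠ 1 := by
      have := v_le t; intro h; rw [h] at this; norm_num at this
    have hv : ContDiffAt ℝ (⊤ : ℕ∞) (fun t : ℝ => 0.99 * Real.cos (3*t)) t := by
      exact (contDiff_const.mul (Real.contDiff_cos.comp
        (contDiff_const.mul contDiff_id))).contDiffAt
    have harc : ContDiffAt ℝ (⊤ : ℕ∞) (fun t : ℝ => Real.arccos (0.99 * Real.cos (3*t))) t :=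
      by have := (Real.contDiffAt_arccos hne1 hne2).comp t hv; exact this
    have hB : ContDiffAt ℝ (⊤ : ℕ∞) Bf t := by
      apply ContDiffAt.sub
      · exact contDiffAt_const
      · exact harc.div_const 3
    exact (Real.contDiff_cos.contDiffAt).comp t hB
  have : ContDiff ℝ (⊤ : ℕ∞) (fun t => 1 / hf t) :=
    contDiff_const.div hhf (fun t => ne_of_gt (hf_pos t))
  rw [gBP_eq]
  exact this

end LLX

/-- Counter-example 1: gBP is smooth and strictly positive on [0,π/3],
g′(0) = g′(π/3) = 0 and g² + 2g′² − gg″ ≥ 0 on (0,π/3) (so the deviatoric section is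
smooth and convex, i.e. G = q/g(θ) is convex), yet the second Laydi–Lexcellent condition
cos θ·gg′ + sin θ·(2g′² − gg″) ≥ 0 fails at some θ ∈ (0,π/3): the Laydi–Lexcellent
conditions are not necessary for convexity. -/
theorem laydi_lexcellent_not_necessary :
    ContDiffOn ℝ (⊤ : ℕ∞) gBP (Set.Icc 0 (Real.pi / 3)) ∧
    (∀ t ∈ Set.Icc 0 (Real.pi / 3), 0 < gBP t) ∧
    deriv gBP 0 = 0 ∧
    deriv gBP (Real.pi / 3) = 0 ∧
    (∀ t ∈ Set.Ioo 0 (Real.pi / 3),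
      0 ≤ (gBP t) ^ 2 + 2 * (deriv gBP t) ^ 2 - gBP t * deriv (deriv gBP) t) ∧
    ConvexOn ℝ Set.univ (Gf gBP) ∧
    (∃ t ∈ Set.Ioo 0 (Real.pi / 3),
      Real.cos t * (gBP t * deriv gBP t)
        + Real.sin t * (2 * (deriv gBP t) ^ 2 - gBP t * deriv (deriv gBP) t) < 0) := by
  have hpi := Real.pi_pos
  refine ⟨LLX.contDiff_gBP.contDiffOn, fun t _ => LLX.gBP_pos t, ?_, ?_, ?_, LLX.convexGf, ?_⟩
  · rw [LLX.deriv_g]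
    have : LLX.h1 0 = 0 := by
      simp [LLX.h1]
    rw [LLX.g1, this]
    simp
  · rw [LLX.deriv_g]
    have : LLX.h1 (Real.pi/3) = 0 := by
      rw [LLX.h1, show 3 * (Real.pi/3) = Real.pi by ring, Real.sin_pi]
      simp
    rw [LLX.g1, this]
    simp
  · intro t _
    rw [LLX.E_eq t]
    exact div_nonneg (LLX.h_plus_h2_nonneg t) (pow_nonneg (LLX.hf_pos t).le 3)
  · refine ⟨Real.pi/6, ⟨by linarith, by linarith⟩, ?_⟩
    rw [LLX.LL_eq]
    apply div_neg_of_neg_of_pos _ (pow_pos (LLX.hf_pos _) 3)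
    -- compute values at π/6
    have h3t : 3 * (Real.pi/6) = Real.pi/2 := by ring
    have hv : (0.99:ℝ) * Real.cos (3*(Real.pi/6)) = 0 := by
      rw [h3t, Real.cos_pi_div_two]; ring
    have hBf : LLX.Bf (Real.pi/6) = -(Real.pi/12) := by
      rw [LLX.Bf, hv, Real.arccos_zero]; ring
    have hsf : LLX.sf (Real.pi/6) = 1 := by
      rw [LLX.sf, hv]; norm_num
    have hsin3t : Real.sin (3*(Real.pi/6)) = 1 := by rw [h3t, Real.sin_pi_div_two]
    have hcos3t : Real.cos (3*(Real.pi/6)) = 0 := by rw [h3t, Real.cos_pi_div_two]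
    have h1v : LLX.h1 (Real.pi/6) = -(0.99 * Real.sin (Real.pi/12)) := by
      rw [LLX.h1, hBf, hsf, hsin3t, Real.sin_neg]
      ring
    have h2v : LLX.h2 (Real.pi/6) = -(0.99^2 * Real.cos (Real.pi/12)) := by
      rw [LLX.h2, hBf, hsf, hsin3t, hcos3t, Real.cos_neg]
      ring
    rw [h1v, h2v, Real.cos_pi_div_six, Real.sin_pi_div_six]
    -- numeric estimate
    have hπ15 : Real.pi < 3.15 := Real.pi_lt_d2
    have hπ14 : 3.14 < Real.pi := Real.pi_gt_d2
    have hsin_le : Real.sin (Real.pi/12) < Real.pi/12 := Real.sin_lt (by positivity)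
    have hsin_nonneg : 0 ≤ Real.sin (Real.pi/12) :=
      Real.sin_nonneg_of_nonneg_of_le_pi (by positivity) (by linarith)
    have hcos_ge : 1 - (Real.pi/12)^2/2 ≤ Real.cos (Real.pi/12) :=
      Real.one_sub_sq_div_two_le_cos
    have hs3 : Real.sqrt 3 < 1.7321 := by
      nlinarith [LLX.sqrt3_sq, Real.sqrt_nonneg 3]
    nlinarith [hsin_le, hcos_ge, hs3, hsin_nonneg, Real.sqrt_nonneg 3, hπ15, hπ14]
end
end
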